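/- arXiv:2302.03662 — 5 statements merged into one kernel-verified Lean document; each statement's English description precedes it below -/
import Mathlib

section
/- Let ζ_m^j ∈ ℝ^d for m ∈ [M], j ∈ [N] be fixed vectors ordered by the double-shuffling procedure. Fix two distinct indices r ≠ s in [MN] that belong to the same client block, i.e., ⌊r/N⌋ = ⌊s/N⌋ (and hence correspond to two distinct data points of the same randomly chosen client). Then the covariance satisfies E[⟨ζ_{π_r} − ζ̃, ζ_{π_s} − ζ̃⟩] = (1/(N−1))·(N·σ̃² − σ²), where σ² = (1/(NM)) Σ_{m=1}^M Σ_{j=1}^N ‖ζ_m^j − ζ̃‖² and σ̃² = (1/M) Σ_{m=1}^M ‖ζ̃_m − ζ̃‖² with ζ̃_m = (1/N) Σ_{j=1}^N ζ_m^j. -/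
open Finset RealInnerProductSpace

noncomputable section

/-- Points in `ℝ^d`. -/
abbrev Vec (d : ℕ) := EuclideanSpace ℝ (Fin d)

/-- The sample space of the double-shuffling procedure: an outer permutation of the `M`
clients together with, for each client, a permutation of its `N` data points. -/
abbrev DSOmega (M N : ℕ) := Equiv.Perm (Fin M) × (Fin M → Equiv.Perm (Fin N))

/-- The vector processed at block `b`, within-block position `j`, by the double-shuffling
procedure. -/
def dsVec {d M N : ℕ} (ζ : Fin M → Fin N → Vec d) (ω : DSOmega M N)
    (b : Fin M) (j : Fin N) : Vec d :=
  ζ (ω.1 b) (ω.2 (ω.1 b) j)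

/-- The overall average `ζ̃ = (1/(MN)) Σ_m Σ_j ζ_m^j`. -/
def zbar {d M N : ℕ} (ζ : Fin M → Fin N → Vec d) : Vec d :=
  ((M : ℝ) * (N : ℝ))⁻¹ • ∑ m, ∑ j, ζ m j

/-- The client average `ζ̃_m = (1/N) Σ_j ζ_m^j`. -/
def zbarC {d M N : ℕ} (ζ : Fin M → Fin N → Vec d) (m : Fin M) : Vec d :=
  (N : ℝ)⁻¹ • ∑ j, ζ m j

/-- The population variance `σ² = (1/(NM)) Σ_m Σ_j ‖ζ_m^j − ζ̃‖²`. -/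
def sigma2 {d M N : ℕ} (ζ : Fin M → Fin N → Vec d) : ℝ :=
  ((N : ℝ) * (M : ℝ))⁻¹ * ∑ m, ∑ j, ‖ζ m j - zbar ζ‖ ^ 2

/-- The population variance of client averages `σ̃² = (1/M) Σ_m ‖ζ̃_m − ζ̃‖²`. -/
def sigmaT2 {d M N : ℕ} (ζ : Fin M → Fin N → Vec d) : ℝ :=
  (M : ℝ)⁻¹ * ∑ m, ‖zbarC ζ m - zbar ζ‖ ^ 2

lemma sum_fun_apply {α β : Type*} [Fintype α] [DecidableEq α] [Fintype β]
    {V : Type*} [AddCommMonoid V] (a : α) (g : β → V) :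
    ∑ f : α → β, g (f a)
      = (Fintype.card β ^ (Fintype.card α - 1)) • ∑ y, g y := by
  have h1 : ∑ f : α → β, g (f a)
      = ∑ p : β × ({ j // j ≠ a } → β), g p.1 :=
    Fintype.sum_equiv (Equiv.funSplitAt a β) _ _ (fun f => rfl)
  rw [h1, Fintype.sum_prod_type]
  simp [Finset.sum_const, Fintype.card_fun, Fintype.card_subtype_compl,
    Fintype.card_subtype_eq, mul_comm, Finset.smul_sum]

lemma sum_perm_apply {n : ℕ} {V : Type*} [AddCommMonoid V]
    (b : Fin (n + 1)) (g : Fin (n + 1) → V) :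
    ∑ τ : Equiv.Perm (Fin (n + 1)), g (τ b) = (n.factorial) • ∑ x, g x := by
  have h1 : ∑ τ : Equiv.Perm (Fin (n + 1)), g (τ b)
      = ∑ σ : Equiv.Perm (Fin (n + 1)), g (σ 0) := by
    rw [← Equiv.sum_comp (Equiv.mulRight (Equiv.swap 0 b))
      (fun τ : Equiv.Perm (Fin (n + 1)) => g (τ b))]
    simp [Equiv.Perm.mul_apply, Equiv.swap_apply_left]
  have h2 : ∑ σ : Equiv.Perm (Fin (n + 1)), g (σ 0)
      = ∑ p : Fin (n + 1) × Equiv.Perm (Fin n), g (Equiv.Perm.decomposeFin.symm p 0) :=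
    (Equiv.sum_comp Equiv.Perm.decomposeFin.symm
      (fun σ : Equiv.Perm (Fin (n + 1)) => g (σ 0))).symm
  rw [h1, h2]
  rw [Fintype.sum_prod_type]
  simp only [Equiv.Perm.decomposeFin_symm_apply_zero]
  simp [Finset.sum_const, Fintype.card_perm, Fintype.card_fin, Finset.smul_sum]

lemma sum_perm_apply2 {n : ℕ} {V : Type*} [AddCommGroup V]
    (j1 j2 : Fin (n + 2)) (hj : j1 ≠ j2) (h : Fin (n + 2) → Fin (n + 2) → V) :
    ∑ σ : Equiv.Perm (Fin (n + 2)), h (σ j1) (σ j2)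
      = (n.factorial) • ∑ a, ((∑ c, h a c) - h a a) := by
  -- a permutation sending 0 ↦ j1 and 1 ↦ j2
  set c₁ : Fin (n + 2) := Equiv.swap 0 j1 1 with hc₁
  set g : Equiv.Perm (Fin (n + 2)) := Equiv.swap c₁ j2 * Equiv.swap 0 j1 with hgdef
  have hc₁j1 : c₁ ≠ j1 := by
    rcases eq_or_ne j1 1 with h1 | h1
    · subst h1; simp [hc₁, Equiv.swap_apply_right]
    · rw [hc₁, Equiv.swap_apply_of_ne_of_ne one_ne_zero (Ne.symm h1)]
      exact Ne.symm h1
  have hg0 : g 0 = j1 := by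
    show Equiv.swap c₁ j2 (Equiv.swap 0 j1 0) = j1
    rw [Equiv.swap_apply_left, Equiv.swap_apply_of_ne_of_ne (Ne.symm hc₁j1) hj]
  have hg1 : g 1 = j2 := by
    show Equiv.swap c₁ j2 (Equiv.swap 0 j1 1) = j2
    rw [← hc₁, Equiv.swap_apply_left]
  -- reduce to j1 = 0, j2 = 1
  have h1 : ∑ σ : Equiv.Perm (Fin (n + 2)), h (σ j1) (σ j2)
      = ∑ σ : Equiv.Perm (Fin (n + 2)), h (σ 0) (σ 1) := by
    rw [← Equiv.sum_comp (Equiv.mulRight g)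
      (fun σ : Equiv.Perm (Fin (n + 2)) => h (σ 0) (σ 1))]
    simp only [Equiv.coe_mulRight, Equiv.Perm.mul_apply, hg0, hg1]
  rw [h1]
  have h2 : ∑ σ : Equiv.Perm (Fin (n + 2)), h (σ 0) (σ 1)
      = ∑ p : Fin (n + 2) × Equiv.Perm (Fin (n + 1)),
          h (Equiv.Perm.decomposeFin.symm p 0) (Equiv.Perm.decomposeFin.symm p 1) :=
    (Equiv.sum_comp Equiv.Perm.decomposeFin.symm _).symm
  rw [h2, Fintype.sum_prod_type]
  simp only [Equiv.Perm.decomposeFin_symm_apply_zero, Equiv.Perm.decomposeFin_symm_apply_one]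
  have h3 : ∀ p : Fin (n + 2),
      ∑ e : Equiv.Perm (Fin (n + 1)), h p (Equiv.swap 0 p (e 0).succ)
        = (n.factorial) • ∑ q : Fin (n + 1), h p (Equiv.swap 0 p q.succ) :=
    fun p => sum_perm_apply 0 (fun q => h p (Equiv.swap 0 p q.succ))
  rw [Finset.sum_congr rfl (fun p _ => h3 p), ← Finset.smul_sum]
  congr 1
  refine Finset.sum_congr rfl (fun p _ => ?_)
  have h4 : ∑ x : Fin (n + 2), h p (Equiv.swap 0 p x)
      = h p (Equiv.swap 0 p 0) + ∑ q : Fin (n + 1), h p (Equiv.swap 0 p q.succ) :=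
    Fin.sum_univ_succ _
  have h5 : ∑ x : Fin (n + 2), h p (Equiv.swap 0 p x) = ∑ c, h p c :=
    Equiv.sum_comp (Equiv.swap 0 p) (fun c => h p c)
  have h6 : Equiv.swap 0 p 0 = p := Equiv.swap_apply_left _ _
  rw [h6] at h4
  rw [← h5, h4]
  abel

lemma final_arith (m y F G p A B : ℝ) (hm : m + 1 ≠ 0) (hy1 : y + 1 ≠ 0)
    (hy2 : y + 2 ≠ 0) (hF : F ≠ 0) (hG : G ≠ 0) (hp : p ≠ 0) :
    ((m + 1) * G * (p * ((y + 2) * (y + 1) * F)))⁻¹ *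
        (p * (G * (F * ((y + 2) ^ 2 * A - B))))
      = 1 / (y + 2 - 1) * ((y + 2) * ((m + 1)⁻¹ * A) - ((y + 2) * (m + 1))⁻¹ * B) := by
  have h : y + 2 - 1 = y + 1 := by ring
  rw [h]
  field_simp

/-- For two distinct positions of the double-shuffling order lying in the
same client block (block `b`, within-block positions `j1 ≠ j2`, i.e. two distinct data
points of the same randomly chosen client), the covariance satisfies
`E[⟨ζ_{π_r} − ζ̃, ζ_{π_s} − ζ̃⟩] = (1/(N−1))·(N σ̃² − σ²)`. -/
theorem statement1 (d M N : ℕ) (hN : 2 ≤ N)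
    (ζ : Fin M → Fin N → Vec d)
    (b : Fin M) (j1 j2 : Fin N) (hj : j1 ≠ j2) :
    (Fintype.card (DSOmega M N) : ℝ)⁻¹ *
        ∑ ω : DSOmega M N, ⟪dsVec ζ ω b j1 - zbar ζ, dsVec ζ ω b j2 - zbar ζ⟫
      = 1 / ((N : ℝ) - 1) * ((N : ℝ) * sigmaT2 ζ - sigma2 ζ) := by
  obtain ⟨n, rfl⟩ : ∃ n, N = n + 2 := ⟨N - 2, by omega⟩
  obtain ⟨M', rfl⟩ : ∃ M', M = M' + 1 := by
    cases M with
    | zero => exact b.elim0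
    | succ M' => exact ⟨M', rfl⟩
  -- abbreviations
  set z : Vec d := zbar ζ with hz
  -- Step 0: split the sum over Ω
  rw [Fintype.sum_prod_type]
  simp only [dsVec]
  -- Step 1: sum over the inner permutation assignment π
  have step1 : ∀ τ : Equiv.Perm (Fin (M' + 1)),
      ∑ π : Fin (M' + 1) → Equiv.Perm (Fin (n + 2)),
        ⟪ζ (τ b) (π (τ b) j1) - z, ζ (τ b) (π (τ b) j2) - z⟫
      = ((n + 2).factorial ^ M') •
          ∑ σ : Equiv.Perm (Fin (n + 2)), ⟪ζ (τ b) (σ j1) - z, ζ (τ b) (σ j2) - z⟫ := by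
    intro τ
    have := sum_fun_apply (τ b)
      (fun σ : Equiv.Perm (Fin (n + 2)) => ⟪ζ (τ b) (σ j1) - z, ζ (τ b) (σ j2) - z⟫)
    simpa [Fintype.card_perm, Fintype.card_fin] using this
  rw [Finset.sum_congr rfl (fun τ _ => step1 τ), ← Finset.smul_sum]
  -- Step 2: sum over the outer permutation τ
  rw [sum_perm_apply b (fun m => ∑ σ : Equiv.Perm (Fin (n + 2)),
        ⟪ζ m (σ j1) - z, ζ m (σ j2) - z⟫)]
  -- Step 3: for each client m, sum over its permutation σ
  have step3 : ∀ m : Fin (M' + 1),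
      ∑ σ : Equiv.Perm (Fin (n + 2)), ⟪ζ m (σ j1) - z, ζ m (σ j2) - z⟫
      = (n.factorial) •
          (((n : ℝ) + 2) ^ 2 * ‖zbarC ζ m - z‖ ^ 2 - ∑ j, ‖ζ m j - z‖ ^ 2) := by
    intro m
    rw [sum_perm_apply2 j1 j2 hj (fun a c => ⟪ζ m a - z, ζ m c - z⟫)]
    congr 1
    have hc : ((n + 2 : ℕ) : ℝ) = (n : ℝ) + 2 := by push_cast; ring
    have hsum : ∑ j, (ζ m j - z) = ((n : ℝ) + 2) • (zbarC ζ m - z) := by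
      rw [smul_sub, zbarC, smul_smul, hc, mul_inv_cancel₀ (by positivity), one_smul,
        Finset.sum_sub_distrib, Finset.sum_const, card_univ, Fintype.card_fin,
        ← Nat.cast_smul_eq_nsmul ℝ, hc]
    calc ∑ a, ((∑ c, ⟪ζ m a - z, ζ m c - z⟫) - ⟪ζ m a - z, ζ m a - z⟫)
        = ⟪∑ a, (ζ m a - z), ∑ c, (ζ m c - z)⟫ - ∑ a, ‖ζ m a - z‖ ^ 2 := by
          rw [sum_inner, Finset.sum_sub_distrib]
          congr 1
          · exact Finset.sum_congr rfl fun a _ => (inner_sum _ _ _).symm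
          · exact Finset.sum_congr rfl fun a _ => real_inner_self_eq_norm_sq _
      _ = ((n : ℝ) + 2) ^ 2 * ‖zbarC ζ m - z‖ ^ 2 - ∑ a, ‖ζ m a - z‖ ^ 2 := by
          rw [hsum, real_inner_smul_left, real_inner_smul_right,
            real_inner_self_eq_norm_sq]
          ring
  rw [Finset.sum_congr rfl (fun m _ => step3 m), ← Finset.smul_sum]
  -- Step 4: arithmetic
  have hcard : (Fintype.card (DSOmega (M' + 1) (n + 2)) : ℝ)
      = ((M' + 1).factorial : ℝ) * ((n + 2).factorial : ℝ) ^ (M' + 1) := by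
    simp only [DSOmega, Fintype.card_prod, Fintype.card_perm, Fintype.card_fun,
      Fintype.card_fin]
    push_cast; ring
  rw [hcard, sigma2, sigmaT2]
  simp only [← Nat.cast_smul_eq_nsmul ℝ, smul_eq_mul]
  set A : ℝ := ∑ m, ‖zbarC ζ m - z‖ ^ 2 with hA
  set B : ℝ := ∑ m, ∑ j, ‖ζ m j - z‖ ^ 2 with hB
  have hsplit : ∑ m : Fin (M' + 1),
      (((n : ℝ) + 2) ^ 2 * ‖zbarC ζ m - z‖ ^ 2 - ∑ j, ‖ζ m j - z‖ ^ 2)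
      = ((n : ℝ) + 2) ^ 2 * A - B := by
    rw [Finset.sum_sub_distrib, ← Finset.mul_sum, hA, hB]
  rw [hsplit]
  have hP : (0:ℝ) < ((n + 2).factorial : ℝ) ^ M' := by positivity
  set P : ℝ := ((n + 2).factorial : ℝ) ^ M' with hPdef
  rw [show (((n + 2).factorial ^ M' : ℕ) : ℝ) = P from by rw [hPdef]; push_cast; ring]
  rw [show ((n + 2).factorial : ℝ) ^ (M' + 1) = P * ((n + 2).factorial : ℝ) from by
    rw [hPdef, pow_succ]]
  have hfac1 : (((M' + 1).factorial : ℕ) : ℝ) = ((M' : ℝ) + 1) * ((M'.factorial : ℕ) : ℝ) := by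
    rw [Nat.factorial_succ]; push_cast; ring
  have hfac2 : (((n + 2).factorial : ℕ) : ℝ)
      = ((n : ℝ) + 2) * ((n : ℝ) + 1) * ((n.factorial : ℕ) : ℝ) := by
    show (((n + 1 + 1).factorial : ℕ) : ℝ) = _
    rw [Nat.factorial_succ, Nat.factorial_succ]; push_cast; ring
  have hM : ((M' : ℝ) + 1) ≠ 0 := by positivity
  have hn2 : ((n : ℝ) + 2) ≠ 0 := by positivity
  have hn1 : ((n : ℝ) + 1) ≠ 0 := by positivity
  have hnf : ((n.factorial : ℕ) : ℝ) ≠ 0 := by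
    exact_mod_cast Nat.factorial_ne_zero n
  have hMf : ((M'.factorial : ℕ) : ℝ) ≠ 0 := by
    exact_mod_cast Nat.factorial_ne_zero M'
  rw [hfac1, hfac2]
  push_cast
  exact final_arith (M' : ℝ) (n : ℝ) _ _ _ A B hM hn1 hn2 hnf hMf hP.ne'

end
end

section
/- Let ζ_m^j ∈ ℝ^d for m ∈ [M], j ∈ [N] be fixed vectors ordered by the double-shuffling procedure. Fix two indices r, s in [MN] that belong to different client blocks, i.e., ⌊r/N⌋ ≠ ⌊s/N⌋ (and hence correspond to data points of two distinct randomly chosen clients). Then the covariance satisfies E[⟨ζ_{π_r} − ζ̃, ζ_{π_s} − ζ̃⟩] = −σ̃²/(M−1), where σ̃² = (1/M) Σ_{m=1}^M ‖ζ̃_m − ζ̃‖² with ζ̃_m = (1/N) Σ_{j=1}^N ζ_m^j. -/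
open Finset RealInnerProductSpace

noncomputable section

section Helpers

lemma sum_perm_eval_eq {n : ℕ} {V : Type*} [AddCommMonoid V] (g : Fin n → V) (b b' : Fin n) :
    ∑ σ : Equiv.Perm (Fin n), g (σ b) = ∑ σ : Equiv.Perm (Fin n), g (σ b') := by
  refine Fintype.sum_equiv (Equiv.mulRight (Equiv.swap b b')) _ _ fun σ => ?_
  simp [Equiv.Perm.mul_apply]

lemma sum_perm_eval {n : ℕ} {V : Type*} [AddCommGroup V] [Module ℝ V] (hn : 0 < n)
    (g : Fin n → V) (b : Fin n) :
    ∑ σ : Equiv.Perm (Fin n), g (σ b) = ((n.factorial : ℝ) / n) • ∑ k, g k := by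
  have hn' : (n : ℝ) ≠ 0 := Nat.cast_ne_zero.mpr hn.ne'
  have h1 : (n : ℝ) • ∑ σ : Equiv.Perm (Fin n), g (σ b)
      = (n.factorial : ℝ) • ∑ k, g k := by
    calc (n : ℝ) • ∑ σ : Equiv.Perm (Fin n), g (σ b)
        = ∑ _b' : Fin n, ∑ σ : Equiv.Perm (Fin n), g (σ b) := by
          rw [Finset.sum_const, card_univ, Fintype.card_fin, Nat.cast_smul_eq_nsmul]
      _ = ∑ b' : Fin n, ∑ σ : Equiv.Perm (Fin n), g (σ b') :=
          Finset.sum_congr rfl fun b' _ => sum_perm_eval_eq g b b'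
      _ = ∑ σ : Equiv.Perm (Fin n), ∑ b', g (σ b') := Finset.sum_comm
      _ = ∑ σ : Equiv.Perm (Fin n), ∑ k, g k :=
          Finset.sum_congr rfl fun σ _ => Equiv.sum_comp σ g
      _ = (n.factorial : ℝ) • ∑ k, g k := by
          rw [Finset.sum_const, card_univ, Fintype.card_perm, Fintype.card_fin,
            Nat.cast_smul_eq_nsmul]
  rw [div_eq_mul_inv, mul_comm, mul_smul, ← h1, inv_smul_smul₀ hn']

lemma card_ne_aux {α : Type*} [Fintype α] [DecidableEq α] (a : α) :
    Fintype.card {x : α // x ≠ a} = Fintype.card α - 1 := by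
  simpa using Fintype.card_subtype_compl (fun x : α => x = a)

lemma sum_fun_eval {α β : Type*} [Fintype α] [DecidableEq α] [Fintype β]
    {V : Type*} [AddCommMonoid V] (a0 : α) (h : β → V) :
    ∑ q : α → β, h (q a0)
      = (Fintype.card β) ^ (Fintype.card α - 1) • ∑ y, h y := by
  calc ∑ q : α → β, h (q a0)
      = ∑ x : β × ({j : α // j ≠ a0} → β), h x.1 :=
        Fintype.sum_equiv (Equiv.funSplitAt a0 β) _ _ (fun q => by simp)
    _ = ∑ y : β, ∑ _r : {j : α // j ≠ a0} → β, h y := by rw [Fintype.sum_prod_type]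
    _ = ∑ y : β, (Fintype.card β) ^ (Fintype.card α - 1) • h y := by
        refine Finset.sum_congr rfl fun y _ => ?_
        rw [Finset.sum_const, card_univ, Fintype.card_fun, card_ne_aux]
    _ = (Fintype.card β) ^ (Fintype.card α - 1) • ∑ y, h y :=
        (Finset.smul_sum).symm

lemma sum_pi_two {α β : Type*} [Fintype α] [DecidableEq α] [Fintype β] {d : ℕ}
    (m1 m2 : α) (hm : m1 ≠ m2) (u v : β → Vec d) :
    ∑ p : α → β, ⟪u (p m1), v (p m2)⟫
      = ((Fintype.card β ^ (Fintype.card α - 2) : ℕ) : ℝ) * ⟪∑ σ, u σ, ∑ σ, v σ⟫ := by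
  have hcard : Fintype.card β ^ (Fintype.card {j : α // j ≠ m1} - 1)
      = Fintype.card β ^ (Fintype.card α - 2) := by
    rw [card_ne_aux, Nat.sub_sub]
  calc ∑ p : α → β, ⟪u (p m1), v (p m2)⟫
      = ∑ x : β × ({j : α // j ≠ m1} → β), ⟪u x.1, v (x.2 ⟨m2, hm.symm⟩)⟫ :=
        Fintype.sum_equiv (Equiv.funSplitAt m1 β) _ _ (fun p => by simp)
    _ = ∑ y : β, ∑ q : {j : α // j ≠ m1} → β, ⟪u y, v (q ⟨m2, hm.symm⟩)⟫ := by
        rw [Fintype.sum_prod_type]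
    _ = ∑ y : β, ⟪u y, ∑ q : {j : α // j ≠ m1} → β, v (q ⟨m2, hm.symm⟩)⟫ := by
        simp_rw [inner_sum]
    _ = ∑ y : β, ⟪u y, ((Fintype.card β ^ (Fintype.card α - 2) : ℕ) : ℝ) • ∑ σ, v σ⟫ := by
        refine Finset.sum_congr rfl fun y _ => ?_
        rw [sum_fun_eval, hcard, Nat.cast_smul_eq_nsmul]
    _ = ((Fintype.card β ^ (Fintype.card α - 2) : ℕ) : ℝ) * ⟪∑ σ, u σ, ∑ σ, v σ⟫ := by
        simp_rw [real_inner_smul_right, ← Finset.mul_sum, ← sum_inner]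

lemma sum_perm_vec {d M N : ℕ} (hN : 0 < N) (ζ : Fin M → Fin N → Vec d) (m : Fin M)
    (j : Fin N) :
    ∑ σ : Equiv.Perm (Fin N), (ζ m (σ j) - zbar ζ)
      = (N.factorial : ℝ) • (zbarC ζ m - zbar ζ) := by
  have hN' : (N : ℝ) ≠ 0 := Nat.cast_ne_zero.mpr hN.ne'
  rw [sum_perm_eval hN (fun k => ζ m k - zbar ζ) j]
  have h2 : ∑ k, (ζ m k - zbar ζ) = (N : ℝ) • (zbarC ζ m - zbar ζ) := by
    rw [Finset.sum_sub_distrib, smul_sub, zbarC, smul_smul, mul_inv_cancel₀ hN', one_smul,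
      Finset.sum_const, card_univ, Fintype.card_fin, Nat.cast_smul_eq_nsmul]
  rw [h2, smul_smul, div_mul_cancel₀ _ hN']

lemma sum_a_zero {d M N : ℕ} (hM : 0 < M) (ζ : Fin M → Fin N → Vec d) :
    ∑ m, (zbarC ζ m - zbar ζ) = 0 := by
  have hM' : (M : ℝ) ≠ 0 := Nat.cast_ne_zero.mpr hM.ne'
  have h1 : ∑ m : Fin M, zbarC ζ m = (M : ℝ) • zbar ζ := by
    simp only [zbarC, zbar, ← Finset.smul_sum, smul_smul]
    congr 1
    rw [mul_inv, ← mul_assoc, mul_inv_cancel₀ hM', one_mul]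
  rw [Finset.sum_sub_distrib, h1, Finset.sum_const, card_univ, Fintype.card_fin,
    ← Nat.cast_smul_eq_nsmul ℝ, sub_self]

lemma T_lemma {d M : ℕ} (hM : 2 ≤ M) (a : Fin M → Vec d) (ha : ∑ m, a m = 0)
    (b1 b2 : Fin M) (hb : b1 ≠ b2) :
    ∑ τ : Equiv.Perm (Fin M), ⟪a (τ b1), a (τ b2)⟫
      = -((M.factorial : ℝ) / ((M : ℝ) * ((M : ℝ) - 1))) * ∑ m, ‖a m‖ ^ 2 := by
  have hMpos : 0 < M := by omega
  have hM0 : (M : ℝ) ≠ 0 := Nat.cast_ne_zero.mpr hMpos.ne'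
  have hM1 : (M : ℝ) - 1 ≠ 0 := by
    have : (2 : ℝ) ≤ (M : ℝ) := by exact_mod_cast hM
    linarith
  have hconst : ∀ b ∈ univ.erase b1,
      (∑ τ : Equiv.Perm (Fin M), (⟪a (τ b1), a (τ b)⟫ : ℝ))
        = ∑ τ : Equiv.Perm (Fin M), ⟪a (τ b1), a (τ b2)⟫ := by
    intro b hbm
    have hb1 : b ≠ b1 := (Finset.mem_erase.mp hbm).1
    refine Fintype.sum_equiv (Equiv.mulRight (Equiv.swap b b2)) _ _ fun τ => ?_
    simp [Equiv.Perm.mul_apply, Equiv.swap_apply_of_ne_of_ne hb1.symm hb,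
      Equiv.swap_apply_right]
  have hleft : ∑ b ∈ univ.erase b1, ∑ τ : Equiv.Perm (Fin M), (⟪a (τ b1), a (τ b)⟫ : ℝ)
      = ((M : ℝ) - 1) * ∑ τ : Equiv.Perm (Fin M), ⟪a (τ b1), a (τ b2)⟫ := by
    rw [Finset.sum_congr rfl hconst, Finset.sum_const,
      Finset.card_erase_of_mem (mem_univ b1), card_univ, Fintype.card_fin, nsmul_eq_mul]
    congr 1
    rw [Nat.cast_sub (by omega : 1 ≤ M), Nat.cast_one]
  have hright : ∑ b ∈ univ.erase b1, ∑ τ : Equiv.Perm (Fin M), (⟪a (τ b1), a (τ b)⟫ : ℝ)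
      = -(((M.factorial : ℝ) / M) * ∑ m, ‖a m‖ ^ 2) := by
    rw [Finset.sum_comm]
    have step : ∀ τ : Equiv.Perm (Fin M),
        ∑ b ∈ univ.erase b1, (⟪a (τ b1), a (τ b)⟫ : ℝ) = -(‖a (τ b1)‖ ^ 2) := by
      intro τ
      have h0 : (∑ b ∈ univ.erase b1, a (τ b)) + a (τ b1) = 0 := by
        rw [Finset.sum_erase_add univ _ (mem_univ b1), Equiv.sum_comp τ a]
        exact ha
      have h0' : ∑ b ∈ univ.erase b1, a (τ b) = -a (τ b1) :=
        eq_neg_of_add_eq_zero_left h0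
      rw [← inner_sum, h0', inner_neg_right, real_inner_self_eq_norm_sq]
    rw [Finset.sum_congr rfl (fun τ _ => step τ), Finset.sum_neg_distrib,
      sum_perm_eval hMpos (fun m => ‖a m‖ ^ 2) b1, smul_eq_mul]
  have hkey := hleft.symm.trans hright
  have hT : ∑ τ : Equiv.Perm (Fin M), (⟪a (τ b1), a (τ b2)⟫ : ℝ)
      = -(((M.factorial : ℝ) / M) * ∑ m, ‖a m‖ ^ 2) / ((M : ℝ) - 1) := by
    rw [eq_div_iff hM1, mul_comm]
    exact hkey
  rw [hT]
  field_simp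

end Helpers

/-- For two positions of the double-shuffling order lying in different
client blocks (blocks `b1 ≠ b2`, arbitrary within-block positions `j1, j2`, i.e. data
points of two distinct randomly chosen clients), the covariance satisfies
`E[⟨ζ_{π_r} − ζ̃, ζ_{π_s} − ζ̃⟩] = −σ̃²/(M−1)`. -/
theorem statement2 (d M N : ℕ) (hM : 2 ≤ M) (hN : 0 < N)
    (ζ : Fin M → Fin N → Vec d)
    (b1 b2 : Fin M) (hb : b1 ≠ b2) (j1 j2 : Fin N) :
    (Fintype.card (DSOmega M N) : ℝ)⁻¹ *
        ∑ ω : DSOmega M N, ⟪dsVec ζ ω b1 j1 - zbar ζ, dsVec ζ ω b2 j2 - zbar ζ⟫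
      = -(sigmaT2 ζ) / ((M : ℝ) - 1) := by
  have hMpos : 0 < M := by omega
  have hM0 : (M : ℝ) ≠ 0 := Nat.cast_ne_zero.mpr hMpos.ne'
  have hM1 : (M : ℝ) - 1 ≠ 0 := by
    have : (2 : ℝ) ≤ (M : ℝ) := by exact_mod_cast hM
    linarith
  have hF : (M.factorial : ℝ) ≠ 0 := Nat.cast_ne_zero.mpr M.factorial_ne_zero
  have hK : ((N.factorial : ℝ)) ^ M ≠ 0 :=
    pow_ne_zero _ (Nat.cast_ne_zero.mpr N.factorial_ne_zero)
  have hpowM : ((N.factorial : ℝ)) ^ M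
      = ((N.factorial : ℝ)) ^ (M - 2) * ((N.factorial : ℝ) * (N.factorial : ℝ)) := by
    rw [← sq, ← pow_add]
    congr 1
    omega
  have hsum : ∑ ω : DSOmega M N, ⟪dsVec ζ ω b1 j1 - zbar ζ, dsVec ζ ω b2 j2 - zbar ζ⟫
      = ((N.factorial : ℝ)) ^ M *
          ∑ τ : Equiv.Perm (Fin M),
            ⟪zbarC ζ (τ b1) - zbar ζ, zbarC ζ (τ b2) - zbar ζ⟫ := by
    rw [Fintype.sum_prod_type, Finset.mul_sum]
    refine Finset.sum_congr rfl fun τ _ => ?_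
    have hm : τ b1 ≠ τ b2 := fun h => hb (τ.injective h)
    have hstep := sum_pi_two (β := Equiv.Perm (Fin N)) (τ b1) (τ b2) hm
      (fun σ => ζ (τ b1) (σ j1) - zbar ζ) (fun σ => ζ (τ b2) (σ j2) - zbar ζ)
    simp only [dsVec]
    rw [hstep, sum_perm_vec hN ζ (τ b1) j1, sum_perm_vec hN ζ (τ b2) j2,
      real_inner_smul_left, real_inner_smul_right]
    simp only [Fintype.card_perm, Fintype.card_fin]
    push_cast
    rw [hpowM]
    ring
  rw [hsum, T_lemma hM (fun m => zbarC ζ m - zbar ζ) (sum_a_zero hMpos ζ) b1 b2 hb]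
  have hcard : (Fintype.card (DSOmega M N) : ℝ)
      = (M.factorial : ℝ) * ((N.factorial : ℝ)) ^ M := by
    simp [DSOmega, Fintype.card_perm, Fintype.card_fin, Fintype.card_fun]
  rw [hcard, sigmaT2]
  field_simp

end
end

section
/- Let ζ_m^j ∈ ℝ^d for m ∈ [M], j ∈ [N] be fixed vectors ordered by the double-shuffling procedure and fix k ∈ {1, …, MN}. Write k = m_k·N + j_k with m_k = ⌊k/N⌋ and j_k = k − m_k·N. Then the variance of the sample average ζ̃_π^k = (1/k) Σ_{i=1}^k ζ_{π_i} equals σ̄²(k) := E[‖ζ̃_π^k − ζ̃‖²] = (j_k (N − j_k))/(k²(N−1)) · σ² + ( (m_k N² + j_k²)(MN−1)/(k²(N−1)(M−1)) − N/(k(N−1)) − 1/(M−1) ) · σ̃², where σ² = (1/(NM)) Σ_{m=1}^M Σ_{j=1}^N ‖ζ_m^j − ζ̃‖² and σ̃² = (1/M) Σ_{m=1}^M ‖ζ̃_m − ζ̃‖². -/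
open Finset

noncomputable section

/-- The sum of the first `k` vectors `ζ_{π_1}, …, ζ_{π_k}` processed by double shuffling:
the pair `(b, j)` sits at (0-based) position `b * N + j` of the processing order. -/
def dsPartialSum {d M N : ℕ} (ζ : Fin M → Fin N → Vec d) (ω : DSOmega M N) (k : ℕ) : Vec d :=
  ∑ p ∈ Finset.univ.filter (fun p : Fin M × Fin N => (p.1 : ℕ) * N + (p.2 : ℕ) < k),
    dsVec ζ ω p.1 p.2

section PermSums

variable {α : Type*} [DecidableEq α] [Fintype α]

lemma perm_sum_congr_one {β : Type*} [AddCommMonoid β] (f : α → β) (i i' : α) :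
    ∑ σ : Equiv.Perm α, f (σ i) = ∑ σ : Equiv.Perm α, f (σ i') := by
  refine Fintype.sum_equiv (Equiv.mulRight (Equiv.swap i' i)) _ _ fun σ => ?_
  simp [Equiv.Perm.mul_apply]

lemma perm_sum_one {β : Type*} [AddCommMonoid β] [Module ℝ β] (f : α → β) (i : α) :
    (Fintype.card α : ℝ) • ∑ σ : Equiv.Perm α, f (σ i)
      = (Fintype.card (Equiv.Perm α) : ℝ) • ∑ x, f x := by
  have key : (Fintype.card α) • (∑ σ : Equiv.Perm α, f (σ i))
      = (Fintype.card (Equiv.Perm α)) • ∑ x, f x := by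
    calc (Fintype.card α) • (∑ σ : Equiv.Perm α, f (σ i))
        = ∑ _i' : α, ∑ σ : Equiv.Perm α, f (σ i) := by
          rw [Finset.sum_const, Finset.card_univ]
      _ = ∑ i' : α, ∑ σ : Equiv.Perm α, f (σ i') :=
          Finset.sum_congr rfl fun i' _ => perm_sum_congr_one f i i'
      _ = ∑ σ : Equiv.Perm α, ∑ i' : α, f (σ i') := Finset.sum_comm
      _ = ∑ σ : Equiv.Perm α, ∑ x, f x :=
          Finset.sum_congr rfl fun σ _ => Equiv.sum_comp σ f
      _ = _ := by rw [Finset.sum_const, Finset.card_univ]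
  rw [← Nat.cast_smul_eq_nsmul ℝ, ← Nat.cast_smul_eq_nsmul ℝ] at key
  exact key

omit [Fintype α] in
lemma exists_perm_two {i j i' j' : α} (hij : i ≠ j) (hij' : i' ≠ j') :
    ∃ e : Equiv.Perm α, e i' = i ∧ e j' = j := by
  refine ⟨Equiv.swap (Equiv.swap i' i j') j * Equiv.swap i' i, ?_, ?_⟩
  · have h1 : Equiv.swap i' i j' ≠ i := by
      intro h
      exact hij' ((Equiv.swap i' i).injective (h.trans (Equiv.swap_apply_left i' i).symm)).symm
    rw [Equiv.Perm.mul_apply, Equiv.swap_apply_left,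
      Equiv.swap_apply_of_ne_of_ne (Ne.symm h1) hij]
  · rw [Equiv.Perm.mul_apply, Equiv.swap_apply_left]

lemma perm_sum_congr_two {β : Type*} [AddCommMonoid β] (g : α → α → β)
    {i j i' j' : α} (hij : i ≠ j) (hij' : i' ≠ j') :
    ∑ σ : Equiv.Perm α, g (σ i) (σ j) = ∑ σ : Equiv.Perm α, g (σ i') (σ j') := by
  obtain ⟨e, he1, he2⟩ := exists_perm_two hij hij'
  refine Fintype.sum_equiv (Equiv.mulRight e) _ _ fun σ => ?_
  simp [Equiv.Perm.mul_apply, he1, he2]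

lemma perm_sum_two {β : Type*} [AddCommGroup β] [Module ℝ β] (g : α → α → β)
    {i j : α} (hij : i ≠ j) :
    ((Fintype.card α : ℝ) * ((Fintype.card α : ℝ) - 1)) • ∑ σ : Equiv.Perm α, g (σ i) (σ j)
      = (Fintype.card (Equiv.Perm α) : ℝ) • ((∑ x, ∑ y, g x y) - ∑ x, g x x) := by
  have hcard : 1 ≤ Fintype.card α := Fintype.card_pos_iff.mpr ⟨i⟩
  have key : ((univ : Finset α).offDiag.card) • (∑ σ : Equiv.Perm α, g (σ i) (σ j))
      = (Fintype.card (Equiv.Perm α)) • ((∑ x, ∑ y, g x y) - ∑ x, g x x) := by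
    calc ((univ : Finset α).offDiag.card) • (∑ σ : Equiv.Perm α, g (σ i) (σ j))
        = ∑ _p ∈ (univ : Finset α).offDiag, ∑ σ : Equiv.Perm α, g (σ i) (σ j) := by
          rw [Finset.sum_const]
      _ = ∑ p ∈ (univ : Finset α).offDiag, ∑ σ : Equiv.Perm α, g (σ p.1) (σ p.2) := by
          refine Finset.sum_congr rfl fun p hp => ?_
          rw [Finset.mem_offDiag] at hp
          exact perm_sum_congr_two g hij hp.2.2
      _ = ∑ σ : Equiv.Perm α, ∑ p ∈ (univ : Finset α).offDiag, g (σ p.1) (σ p.2) :=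
          Finset.sum_comm
      _ = ∑ _σ : Equiv.Perm α, ((∑ x, ∑ y, g x y) - ∑ x, g x x) := by
          refine Finset.sum_congr rfl fun σ _ => ?_
          have hsplit : ∑ p ∈ (univ : Finset α) ×ˢ (univ : Finset α), g (σ p.1) (σ p.2)
              = (∑ p ∈ (univ : Finset α).diag, g (σ p.1) (σ p.2))
                + ∑ p ∈ (univ : Finset α).offDiag, g (σ p.1) (σ p.2) := by
            rw [← Finset.diag_union_offDiag,
              Finset.sum_union (Finset.disjoint_diag_offDiag _)]
          have h1 : ∑ p ∈ (univ : Finset α) ×ˢ (univ : Finset α), g (σ p.1) (σ p.2)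
              = ∑ x, ∑ y, g x y := by
            rw [Finset.sum_product]
            rw [Equiv.sum_comp σ (fun x => ∑ y, g x (σ y))]
            exact Finset.sum_congr rfl fun x _ => Equiv.sum_comp σ (g x)
          have h2 : ∑ p ∈ (univ : Finset α).diag, g (σ p.1) (σ p.2) = ∑ x, g x x := by
            rw [Finset.sum_diag]
            exact Equiv.sum_comp σ (fun x => g x x)
          rw [h2] at hsplit
          rw [eq_sub_iff_add_eq, add_comm, ← hsplit, h1]
      _ = _ := by rw [Finset.sum_const, Finset.card_univ]
  rw [← Nat.cast_smul_eq_nsmul ℝ, ← Nat.cast_smul_eq_nsmul ℝ] at key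
  rw [Finset.offDiag_card, Finset.card_univ] at key
  have hc : ((Fintype.card α * Fintype.card α - Fintype.card α : ℕ) : ℝ)
      = (Fintype.card α : ℝ) * ((Fintype.card α : ℝ) - 1) := by
    have h := Nat.le_mul_of_pos_left (Fintype.card α) hcard
    push_cast [Nat.cast_sub h]
    ring
  rw [hc] at key
  exact key

end PermSums

section FunSums

variable {ι γ β : Type*} [Fintype ι] [DecidableEq ι] [Fintype γ] [AddCommMonoid β]

lemma fun_sum_one (g : γ → β) (a : ι) :
    ∑ f : ι → γ, g (f a) = (Fintype.card γ ^ (Fintype.card ι - 1)) • ∑ b, g b := by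
  calc ∑ f : ι → γ, g (f a)
      = ∑ p : γ × ({ j // j ≠ a } → γ), g p.1 :=
        Fintype.sum_equiv (Equiv.funSplitAt a γ) _ _ fun f => rfl
    _ = ∑ b : γ, ∑ _h : { j // j ≠ a } → γ, g b := Fintype.sum_prod_type _
    _ = ∑ b : γ, (Fintype.card ({ j // j ≠ a } → γ)) • g b := by
        refine Finset.sum_congr rfl fun b _ => ?_
        rw [Finset.sum_const, Finset.card_univ]
    _ = (Fintype.card ({ j // j ≠ a } → γ)) • ∑ b, g b := by
        rw [← Finset.smul_sum]
    _ = _ := by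
        congr 1
        rw [Fintype.card_fun]
        congr 1
        simp [Fintype.card_subtype_compl]

lemma fun_sum_two (g : γ → γ → β) {a₁ a₂ : ι} (h : a₁ ≠ a₂) :
    ∑ f : ι → γ, g (f a₁) (f a₂)
      = (Fintype.card γ ^ (Fintype.card ι - 2)) • ∑ b₁, ∑ b₂, g b₁ b₂ := by
  calc ∑ f : ι → γ, g (f a₁) (f a₂)
      = ∑ p : γ × ({ j // j ≠ a₁ } → γ), g p.1 (p.2 ⟨a₂, Ne.symm h⟩) :=
        Fintype.sum_equiv (Equiv.funSplitAt a₁ γ) _ _ fun f => rfl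
    _ = ∑ b₁ : γ, ∑ f2 : { j // j ≠ a₁ } → γ, g b₁ (f2 ⟨a₂, Ne.symm h⟩) :=
        Fintype.sum_prod_type _
    _ = ∑ b₁ : γ, (Fintype.card γ ^ (Fintype.card { j // j ≠ a₁ } - 1)) • ∑ b₂, g b₁ b₂ :=
        Finset.sum_congr rfl fun b₁ _ => fun_sum_one (fun b₂ => g b₁ b₂) _
    _ = _ := by
        rw [← Finset.smul_sum]
        congr 2
        have hcs : Fintype.card { j // j ≠ a₁ } = Fintype.card ι - 1 := by
          simp [Fintype.card_subtype_compl]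
        rw [hcs]
        omega

end FunSums


section CaseLemmas

open RealInnerProductSpace

variable {d M N : ℕ}

lemma caseA (hM : 1 ≤ M) (hN : 1 ≤ N) (c : Fin M → Fin N → Vec d)
    (b : Fin M) (j : Fin N) :
    (M : ℝ) * (N : ℝ) * ∑ ω : DSOmega M N, ‖dsVec c ω b j‖ ^ 2
      = (Nat.factorial M : ℝ) * (Nat.factorial N : ℝ) ^ M * ∑ m, ∑ x, ‖c m x‖ ^ 2 := by
  have hsum : ∑ ω : DSOmega M N, ‖dsVec c ω b j‖ ^ 2
      = ∑ τ : Equiv.Perm (Fin M), ((Nat.factorial N : ℝ) ^ (M - 1)) *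
          ∑ σ : Equiv.Perm (Fin N), ‖c (τ b) (σ j)‖ ^ 2 := by
    rw [Fintype.sum_prod_type _]
    refine Finset.sum_congr rfl fun τ _ => ?_
    have h := fun_sum_one (ι := Fin M) (γ := Equiv.Perm (Fin N)) (β := ℝ)
      (fun σ => ‖c (τ b) (σ j)‖ ^ 2) (τ b)
    rw [Fintype.card_perm, Fintype.card_fin, Fintype.card_fin] at h
    simp only [dsVec]
    rw [h, nsmul_eq_mul]
    push_cast
    ring
  rw [hsum]
  simp only [← Finset.mul_sum]
  have f1 := perm_sum_one (α := Fin M) (β := ℝ)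
    (fun m => ∑ σ : Equiv.Perm (Fin N), ‖c m (σ j)‖ ^ 2) b
  rw [Fintype.card_perm, Fintype.card_fin, smul_eq_mul, smul_eq_mul] at f1
  beta_reduce at f1
  have f2 : (N : ℝ) * (∑ m, ∑ σ : Equiv.Perm (Fin N), ‖c m (σ j)‖ ^ 2)
      = (Nat.factorial N : ℝ) * ∑ m, ∑ x, ‖c m x‖ ^ 2 := by
    rw [Finset.mul_sum, Finset.mul_sum]
    refine Finset.sum_congr rfl fun m _ => ?_
    have h := perm_sum_one (α := Fin N) (β := ℝ) (fun x => ‖c m x‖ ^ 2) j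
    rw [Fintype.card_perm, Fintype.card_fin, smul_eq_mul, smul_eq_mul] at h
    beta_reduce at h
    exact h
  have hpow : (Nat.factorial N : ℝ) ^ (M - 1) * (Nat.factorial N : ℝ)
      = (Nat.factorial N : ℝ) ^ M := by
    rw [← pow_succ]
    congr 1
    omega
  linear_combination ((N : ℝ) * (Nat.factorial N : ℝ) ^ (M - 1)) * f1
    + ((Nat.factorial M : ℝ) * (Nat.factorial N : ℝ) ^ (M - 1)) * f2
    + ((Nat.factorial M : ℝ) * (∑ m, ∑ x, ‖c m x‖ ^ 2)) * hpow


lemma caseB (hM : 1 ≤ M) (c : Fin M → Fin N → Vec d) (b : Fin M)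
    {j j' : Fin N} (hj : j ≠ j') :
    (M : ℝ) * ((N : ℝ) * ((N : ℝ) - 1)) *
        ∑ ω : DSOmega M N, ⟪dsVec c ω b j, dsVec c ω b j'⟫
      = (Nat.factorial M : ℝ) * (Nat.factorial N : ℝ) ^ M *
          ((∑ m, ‖∑ x, c m x‖ ^ 2) - ∑ m, ∑ x, ‖c m x‖ ^ 2) := by
  have hsum : ∑ ω : DSOmega M N, ⟪dsVec c ω b j, dsVec c ω b j'⟫
      = ∑ τ : Equiv.Perm (Fin M), ((Nat.factorial N : ℝ) ^ (M - 1)) *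
          ∑ σ : Equiv.Perm (Fin N), ⟪c (τ b) (σ j), c (τ b) (σ j')⟫ := by
    rw [Fintype.sum_prod_type _]
    refine Finset.sum_congr rfl fun τ _ => ?_
    have h := fun_sum_one (ι := Fin M) (γ := Equiv.Perm (Fin N)) (β := ℝ)
      (fun σ => ⟪c (τ b) (σ j), c (τ b) (σ j')⟫) (τ b)
    rw [Fintype.card_perm, Fintype.card_fin, Fintype.card_fin] at h
    simp only [dsVec]
    rw [h, nsmul_eq_mul]
    push_cast
    ring
  rw [hsum]
  simp only [← Finset.mul_sum]
  have f1 := perm_sum_one (α := Fin M) (β := ℝ)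
    (fun m => ∑ σ : Equiv.Perm (Fin N), ⟪c m (σ j), c m (σ j')⟫) b
  rw [Fintype.card_perm, Fintype.card_fin, smul_eq_mul, smul_eq_mul] at f1
  have f2 : (N : ℝ) * ((N : ℝ) - 1) *
        (∑ m, ∑ σ : Equiv.Perm (Fin N), ⟪c m (σ j), c m (σ j')⟫)
      = (Nat.factorial N : ℝ) *
          ((∑ m, ‖∑ x, c m x‖ ^ 2) - ∑ m, ∑ x, ‖c m x‖ ^ 2) := by
    rw [Finset.mul_sum, ← Finset.sum_sub_distrib, Finset.mul_sum]
    refine Finset.sum_congr rfl fun m _ => ?_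
    have h := perm_sum_two (α := Fin N) (β := ℝ) (fun x y => ⟪c m x, c m y⟫) hj
    rw [Fintype.card_perm, Fintype.card_fin, smul_eq_mul, smul_eq_mul] at h
    have h1 : ∑ x, ∑ y, ⟪c m x, c m y⟫ = ‖∑ x, c m x‖ ^ 2 := by
      rw [← real_inner_self_eq_norm_sq, sum_inner]
      exact Finset.sum_congr rfl fun x _ => (inner_sum _ _ _).symm
    have h2 : ∑ x, ⟪c m x, c m x⟫ = ∑ x, ‖c m x‖ ^ 2 := by
      exact Finset.sum_congr rfl fun x _ => real_inner_self_eq_norm_sq _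
    rw [h1, h2] at h
    exact h
  have hpow : (Nat.factorial N : ℝ) ^ (M - 1) * (Nat.factorial N : ℝ)
      = (Nat.factorial N : ℝ) ^ M := by
    rw [← pow_succ]
    congr 1
    omega
  linear_combination ((N : ℝ) * ((N : ℝ) - 1) * (Nat.factorial N : ℝ) ^ (M - 1)) * f1
    + ((Nat.factorial M : ℝ) * (Nat.factorial N : ℝ) ^ (M - 1)) * f2
    + ((Nat.factorial M : ℝ) *
        ((∑ m, ‖∑ x, c m x‖ ^ 2) - ∑ m, ∑ x, ‖c m x‖ ^ 2)) * hpow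

lemma caseC (hM : 2 ≤ M) (c : Fin M → Fin N → Vec d)
    {b b' : Fin M} (hb : b ≠ b') (j j' : Fin N) :
    (M : ℝ) * ((M : ℝ) - 1) * (N : ℝ) ^ 2 *
        ∑ ω : DSOmega M N, ⟪dsVec c ω b j, dsVec c ω b' j'⟫
      = (Nat.factorial M : ℝ) * (Nat.factorial N : ℝ) ^ M *
          (‖∑ m, ∑ x, c m x‖ ^ 2 - ∑ m, ‖∑ x, c m x‖ ^ 2) := by
  have hv : ∀ (m : Fin M) (jj : Fin N),
      (N : ℝ) • ∑ σ : Equiv.Perm (Fin N), c m (σ jj)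
        = (Nat.factorial N : ℝ) • ∑ x, c m x := by
    intro m jj
    have h := perm_sum_one (α := Fin N) (β := Vec d) (fun x => c m x) jj
    rwa [Fintype.card_perm, Fintype.card_fin] at h
  have hsum : ∀ τ : Equiv.Perm (Fin M),
      (N : ℝ) ^ 2 * ∑ π : Fin M → Equiv.Perm (Fin N),
          ⟪dsVec c (τ, π) b j, dsVec c (τ, π) b' j'⟫
        = (Nat.factorial N : ℝ) ^ (M - 2) * (Nat.factorial N : ℝ) ^ 2 *
            ⟪∑ x, c (τ b) x, ∑ x, c (τ b') x⟫ := by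
    intro τ
    have hne : τ b ≠ τ b' := fun h => hb (τ.injective h)
    have h := fun_sum_two (ι := Fin M) (γ := Equiv.Perm (Fin N)) (β := ℝ)
      (fun σ₁ σ₂ => ⟪c (τ b) (σ₁ j), c (τ b') (σ₂ j')⟫) hne
    rw [Fintype.card_perm, Fintype.card_fin, Fintype.card_fin] at h
    have hinner : ∑ σ₁ : Equiv.Perm (Fin N), ∑ σ₂ : Equiv.Perm (Fin N),
          ⟪c (τ b) (σ₁ j), c (τ b') (σ₂ j')⟫
        = ⟪∑ σ₁ : Equiv.Perm (Fin N), c (τ b) (σ₁ j),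
            ∑ σ₂ : Equiv.Perm (Fin N), c (τ b') (σ₂ j')⟫ := by
      rw [sum_inner]
      exact Finset.sum_congr rfl fun σ₁ _ => (inner_sum _ _ _).symm
    have hsq : (N : ℝ) ^ 2 *
          ⟪∑ σ₁ : Equiv.Perm (Fin N), c (τ b) (σ₁ j),
            ∑ σ₂ : Equiv.Perm (Fin N), c (τ b') (σ₂ j')⟫
        = (Nat.factorial N : ℝ) ^ 2 * ⟪∑ x, c (τ b) x, ∑ x, c (τ b') x⟫ := by
      calc (N : ℝ) ^ 2 * ⟪∑ σ₁ : Equiv.Perm (Fin N), c (τ b) (σ₁ j),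
              ∑ σ₂ : Equiv.Perm (Fin N), c (τ b') (σ₂ j')⟫
          = ⟪(N : ℝ) • ∑ σ₁ : Equiv.Perm (Fin N), c (τ b) (σ₁ j),
              (N : ℝ) • ∑ σ₂ : Equiv.Perm (Fin N), c (τ b') (σ₂ j')⟫ := by
            rw [real_inner_smul_left, real_inner_smul_right]
            ring
        _ = ⟪(Nat.factorial N : ℝ) • ∑ x, c (τ b) x,
              (Nat.factorial N : ℝ) • ∑ x, c (τ b') x⟫ := by
            rw [hv (τ b) j, hv (τ b') j']
        _ = (Nat.factorial N : ℝ) ^ 2 * ⟪∑ x, c (τ b) x, ∑ x, c (τ b') x⟫ := by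
            rw [real_inner_smul_left, real_inner_smul_right]
            ring
    calc (N : ℝ) ^ 2 * ∑ π : Fin M → Equiv.Perm (Fin N),
            ⟪dsVec c (τ, π) b j, dsVec c (τ, π) b' j'⟫
        = (N : ℝ) ^ 2 * ((Nat.factorial N ^ (M - 2) : ℕ) •
            ∑ σ₁ : Equiv.Perm (Fin N), ∑ σ₂ : Equiv.Perm (Fin N),
              ⟪c (τ b) (σ₁ j), c (τ b') (σ₂ j')⟫) := by
          simp only [dsVec]
          rw [h]
      _ = (Nat.factorial N : ℝ) ^ (M - 2) * ((N : ℝ) ^ 2 *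
            ⟪∑ σ₁ : Equiv.Perm (Fin N), c (τ b) (σ₁ j),
              ∑ σ₂ : Equiv.Perm (Fin N), c (τ b') (σ₂ j')⟫) := by
          rw [hinner, nsmul_eq_mul]
          push_cast
          ring
      _ = _ := by rw [hsq]; ring
  have hstep : ∑ ω : DSOmega M N, ⟪dsVec c ω b j, dsVec c ω b' j'⟫
      = ∑ τ : Equiv.Perm (Fin M), ∑ π : Fin M → Equiv.Perm (Fin N),
          ⟪dsVec c (τ, π) b j, dsVec c (τ, π) b' j'⟫ := Fintype.sum_prod_type _
  have f1 := perm_sum_two (α := Fin M) (β := ℝ)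
    (fun m m' => ⟪∑ x, c m x, ∑ x, c m' x⟫) hb
  rw [Fintype.card_perm, Fintype.card_fin, smul_eq_mul, smul_eq_mul] at f1
  have h1 : ∑ m, ∑ m', ⟪∑ x, c m x, ∑ x, c m' x⟫ = ‖∑ m, ∑ x, c m x‖ ^ 2 := by
    rw [← real_inner_self_eq_norm_sq, sum_inner]
    exact Finset.sum_congr rfl fun m _ => (inner_sum _ _ _).symm
  have h2 : ∑ m, ⟪∑ x, c m x, ∑ x, c m x⟫ = ∑ m, ‖∑ x, c m x‖ ^ 2 :=
    Finset.sum_congr rfl fun m _ => real_inner_self_eq_norm_sq _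
  rw [h1, h2] at f1
  have hmul : (N : ℝ) ^ 2 * ∑ τ : Equiv.Perm (Fin M), ∑ π : Fin M → Equiv.Perm (Fin N),
        ⟪dsVec c (τ, π) b j, dsVec c (τ, π) b' j'⟫
      = (Nat.factorial N : ℝ) ^ (M - 2) * (Nat.factorial N : ℝ) ^ 2 *
          ∑ τ : Equiv.Perm (Fin M), ⟪∑ x, c (τ b) x, ∑ x, c (τ b') x⟫ := by
    rw [Finset.mul_sum, Finset.mul_sum]
    exact Finset.sum_congr rfl fun τ _ => hsum τ
  have hpow : (Nat.factorial N : ℝ) ^ (M - 2) * (Nat.factorial N : ℝ) ^ 2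
      = (Nat.factorial N : ℝ) ^ M := by
    rw [← pow_add]
    congr 1
    omega
  rw [hstep]
  linear_combination ((M : ℝ) * ((M : ℝ) - 1)) * hmul
    + ((Nat.factorial N : ℝ) ^ (M - 2) * (Nat.factorial N : ℝ) ^ 2) * f1
    + ((Nat.factorial M : ℝ) *
        (‖∑ m, ∑ x, c m x‖ ^ 2 - ∑ m, ‖∑ x, c m x‖ ^ 2)) * hpow

end CaseLemmas



lemma filter_lt_card (N t : ℕ) :
    ((univ : Finset (Fin N)).filter fun j : Fin N => (j : ℕ) < t).card = min t N := by
  have h : ((univ : Finset (Fin N)).filter fun j : Fin N => (j : ℕ) < t).card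
      = (Finset.range (min t N)).card := by
    refine Finset.card_nbij (fun j => (j : ℕ)) ?_ ?_ ?_
    · intro a ha
      simp only [Finset.mem_coe, Finset.mem_filter, Finset.mem_univ, true_and] at ha
      have := a.2
      simp only [Finset.mem_coe, Finset.mem_range, Finset.coe_range, Set.mem_Iio]
      omega
    · exact fun a _ b _ hab => Fin.val_injective hab
    · intro b hb
      simp only [Finset.coe_range, Set.mem_Iio, lt_min_iff] at hb
      exact ⟨⟨b, hb.2⟩, by simp [hb.1], rfl⟩
  rw [h, Finset.card_range]

lemma sum_min_blocks (f : ℕ → ℕ) (hf : f 0 = 0) {M N k : ℕ} (hN : 1 ≤ N) (hk : k ≤ M * N) :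
    ∑ b ∈ Finset.range M, f (min (k - b * N) N) = (k / N) * f N + f (k % N) := by
  have hdm : k / N * N + k % N = k := Nat.div_add_mod' k N
  have hr : k % N < N := Nat.mod_lt _ (by omega)
  have hqM : k / N ≤ M := by
    have := Nat.div_le_div_right (c := N) hk
    rwa [Nat.mul_div_cancel _ (by omega : 0 < N)] at this
  have key : ∀ b ∈ Finset.range M, f (min (k - b * N) N)
      = if b < k / N then f N else if b = k / N then f (k % N) else 0 := by
    intro b _
    rcases lt_trichotomy b (k / N) with h | h | h
    · have h1 : (b + 1) * N ≤ k / N * N := Nat.mul_le_mul_right _ (by omega)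
      have h2 : b * N + N = (b + 1) * N := by ring
      have h3 : N ≤ k - b * N := by omega
      rw [min_eq_right h3]
      simp [h]
    · subst h
      have h4 : k - k / N * N = k % N := by omega
      rw [h4, min_eq_left (le_of_lt hr)]
      simp
    · have h5 : (k / N + 1) * N ≤ b * N := Nat.mul_le_mul_right _ (by omega)
      have h2 : k / N * N + N = (k / N + 1) * N := by ring
      have h6 : k - b * N = 0 := by omega
      rw [h6, min_eq_left (Nat.zero_le N), hf]
      have hb1 : ¬ b < k / N := by omega
      have hb2 : b ≠ k / N := by omega
      simp [hb1, hb2]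
  rw [Finset.sum_congr rfl key, Finset.sum_ite]
  have hfil1 : (Finset.range M).filter (fun b => b < k / N) = Finset.range (k / N) := by
    ext x
    simp only [Finset.mem_filter, Finset.mem_range]
    omega
  rw [hfil1, Finset.sum_const, Finset.card_range,
    Finset.sum_ite_eq' ((Finset.range M).filter (fun b => ¬ b < k / N)) (k / N)
      (fun _ => f (k % N))]
  by_cases hqM' : k / N < M
  · simp [Finset.mem_filter, Finset.mem_range, hqM', smul_eq_mul]
  · have hq : k / N = M := by omega
    have hkMN : k = M * N := by
      have h7 : M * N ≤ k := by
        calc M * N = k / N * N := by rw [hq]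
        _ ≤ k := by omega
      omega
    have hr0 : k % N = 0 := by rw [hkMN]; exact Nat.mul_mod_left M N
    simp [Finset.mem_filter, Finset.mem_range, hqM', smul_eq_mul, hr0, hf]

set_option maxHeartbeats 1000000 in
open RealInnerProductSpace in
/-- Variance of the double-shuffling sample average: with `m_k = ⌊k/N⌋`
and `j_k = k − m_k N`,
`E[‖ζ̃_π^k − ζ̃‖²] = (j_k (N − j_k))/(k²(N−1)) σ²
  + ((m_k N² + j_k²)(MN−1)/(k²(N−1)(M−1)) − N/(k(N−1)) − 1/(M−1)) σ̃²`. -/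
theorem statement3 (d M N : ℕ) (hM : 2 ≤ M) (hN : 2 ≤ N)
    (ζ : Fin M → Fin N → Vec d) (k : ℕ) (hk1 : 1 ≤ k) (hk2 : k ≤ M * N) :
    (Fintype.card (DSOmega M N) : ℝ)⁻¹ *
        ∑ ω : DSOmega M N, ‖(k : ℝ)⁻¹ • dsPartialSum ζ ω k - zbar ζ‖ ^ 2
      = ((k % N : ℕ) : ℝ) * ((N : ℝ) - ((k % N : ℕ) : ℝ)) /
            ((k : ℝ) ^ 2 * ((N : ℝ) - 1)) * sigma2 ζ
        + ((((k / N : ℕ) : ℝ) * (N : ℝ) ^ 2 + ((k % N : ℕ) : ℝ) ^ 2) *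
              ((M : ℝ) * (N : ℝ) - 1) / ((k : ℝ) ^ 2 * ((N : ℝ) - 1) * ((M : ℝ) - 1))
            - (N : ℝ) / ((k : ℝ) * ((N : ℝ) - 1)) - 1 / ((M : ℝ) - 1)) * sigmaT2 ζ := by
  classical
  have hM0 : (M : ℝ) ≠ 0 := Nat.cast_ne_zero.mpr (by omega)
  have hN0 : (N : ℝ) ≠ 0 := Nat.cast_ne_zero.mpr (by omega)
  have hMR : (2 : ℝ) ≤ (M : ℝ) := by exact_mod_cast hM
  have hNR : (2 : ℝ) ≤ (N : ℝ) := by exact_mod_cast hN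
  have hM1 : (M : ℝ) - 1 ≠ 0 := by linarith
  have hN1 : (N : ℝ) - 1 ≠ 0 := by linarith
  have hk0 : (k : ℝ) ≠ 0 := Nat.cast_ne_zero.mpr (by omega)
  set c : Fin M → Fin N → Vec d := fun m x => ζ m x - zbar ζ with hc
  have hconstsumN : ∀ v : Vec d, ∑ _x : Fin N, v = (N : ℝ) • v := by
    intro v
    rw [Finset.sum_const, Finset.card_univ, Fintype.card_fin, ← Nat.cast_smul_eq_nsmul ℝ]
  have hzsum : ∑ m, ∑ x, ζ m x = ((M : ℝ) * (N : ℝ)) • zbar ζ := by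
    rw [zbar, smul_smul, mul_inv_cancel₀ (mul_ne_zero hM0 hN0), one_smul]
  have hcsum : ∑ m, ∑ x, c m x = (0 : Vec d) := by
    simp only [hc]
    rw [Finset.sum_congr rfl fun (m : Fin M) _ => Finset.sum_sub_distrib _ _,
      Finset.sum_sub_distrib, hzsum]
    rw [Finset.sum_congr rfl fun (m : Fin M) _ => hconstsumN (zbar ζ), Finset.sum_const,
      Finset.card_univ, Fintype.card_fin, ← Nat.cast_smul_eq_nsmul ℝ, smul_smul]
    simp
  have hu : ∀ m : Fin M, ∑ x, c m x = (N : ℝ) • (zbarC ζ m - zbar ζ) := by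
    intro m
    simp only [hc]
    rw [Finset.sum_sub_distrib, hconstsumN (zbar ζ), smul_sub]
    congr 1
    rw [zbarC, smul_inv_smul₀ hN0]
  have hSA : ∑ m, ∑ x, ‖c m x‖ ^ 2 = (N : ℝ) * (M : ℝ) * sigma2 ζ := by
    rw [sigma2, ← mul_assoc, mul_inv_cancel₀ (mul_ne_zero hN0 hM0), one_mul]
  have hSB : ∑ m, ‖∑ x, c m x‖ ^ 2 = (N : ℝ) ^ 2 * ((M : ℝ) * sigmaT2 ζ) := by
    have h1 : ∀ m : Fin M, ‖∑ x, c m x‖ ^ 2 = (N : ℝ) ^ 2 * ‖zbarC ζ m - zbar ζ‖ ^ 2 := by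
      intro m
      rw [hu m, norm_smul, Real.norm_eq_abs, abs_of_nonneg (Nat.cast_nonneg N), mul_pow]
    rw [Finset.sum_congr rfl fun m _ => h1 m, ← Finset.mul_sum]
    congr 1
    rw [sigmaT2, ← mul_assoc, mul_inv_cancel₀ hM0, one_mul]
  have hS0 : ‖∑ m, ∑ x, c m x‖ ^ 2 = (0 : ℝ) := by rw [hcsum]; simp
  -- the index set of the first k positions
  set S : Finset (Fin M × Fin N) :=
    Finset.univ.filter (fun p : Fin M × Fin N => (p.1 : ℕ) * N + (p.2 : ℕ) < k) with hSdef
  set nb : Fin M → ℕ :=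
    fun b => ((univ : Finset (Fin N)).filter fun j : Fin N => (b : ℕ) * N + (j : ℕ) < k).card
    with hnbdef
  have hnb : ∀ b : Fin M, nb b = min (k - (b : ℕ) * N) N := by
    intro b
    have hcg : ((univ : Finset (Fin N)).filter fun j : Fin N => (b : ℕ) * N + (j : ℕ) < k)
        = ((univ : Finset (Fin N)).filter fun j : Fin N => (j : ℕ) < k - (b : ℕ) * N) := by
      apply Finset.filter_congr
      intro j _
      constructor
      · intro h; omega
      · intro h; omega
    rw [hnbdef]
    simp only [hcg]
    rw [filter_lt_card]
  have hN' : 1 ≤ N := by omega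
  have hnbsum : ∑ b : Fin M, nb b = k := by
    rw [Finset.sum_congr rfl fun b _ => hnb b]
    rw [Fin.sum_univ_eq_sum_range (fun i => min (k - i * N) N) M]
    have := sum_min_blocks (fun x => x) rfl hN' hk2
    rw [this]
    have := Nat.div_add_mod' k N
    omega
  have hnbsq : ∑ b : Fin M, nb b * nb b = k / N * (N * N) + k % N * (k % N) := by
    rw [Finset.sum_congr rfl fun b _ => by rw [hnb b]]
    rw [Fin.sum_univ_eq_sum_range (fun i => min (k - i * N) N * min (k - i * N) N) M]
    have := sum_min_blocks (fun x => x * x) rfl hN' hk2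
    simpa using this
  have hcardS : S.card = k := by
    have h0 : S.card = ∑ b : Fin M, nb b := by
      rw [hSdef, Finset.card_filter, Fintype.sum_prod_type _]
      refine Finset.sum_congr rfl fun b _ => ?_
      simp only [hnbdef]
      exact (Finset.card_filter (fun j : Fin N => (b : ℕ) * N + (j : ℕ) < k) univ).symm
    rw [h0, hnbsum]
  have hfib : ∀ b : Fin M, (S.filter fun q => b = q.1).card = nb b := by
    intro b
    simp only [hnbdef]
    refine Finset.card_nbij (fun q => q.2) ?_ ?_ ?_
    · intro q hq
      simp only [hSdef, Finset.mem_coe, Finset.mem_filter, Finset.mem_univ, true_and] at hq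
      simp only [Finset.mem_coe, Finset.mem_filter, Finset.mem_univ, true_and]
      rw [hq.2]
      exact hq.1
    · intro q hq q' hq' hqq
      simp only [hSdef, Finset.mem_coe, Finset.coe_filter, Set.mem_setOf_eq,
        Finset.mem_filter, Finset.mem_univ, true_and] at hq hq'
      exact Prod.ext (hq.2.symm.trans hq'.2) hqq
    · intro j hj
      simp only [Finset.mem_coe, Finset.mem_filter, Finset.mem_univ, true_and] at hj
      refine ⟨(b, j), ?_, rfl⟩
      simp [hSdef, hj]
  have hSnb : (∑ p ∈ S, nb p.1) = k / N * (N * N) + k % N * (k % N) := by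
    rw [← hnbsq, hSdef, Finset.sum_filter, Fintype.sum_prod_type _]
    refine Finset.sum_congr rfl fun b _ => ?_
    have hper : ∑ _a ∈ (univ : Finset (Fin N)).filter
        (fun j : Fin N => (b : ℕ) * N + (j : ℕ) < k), nb b = nb b * nb b := by
      rw [Finset.sum_const, smul_eq_mul]
    rw [← Finset.sum_filter]
    exact hper
  -- expectation values per pair type
  set CW : ℝ := (Nat.factorial M : ℝ) * (Nat.factorial N : ℝ) ^ M with hCW
  have hCW0 : CW ≠ 0 := by
    rw [hCW]
    positivity
  set t0 : ℝ := CW * ((N : ℝ) * (M : ℝ) * sigma2 ζ) / ((M : ℝ) * (N : ℝ)) with ht0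
  set t1 : ℝ := CW * ((N : ℝ) ^ 2 * ((M : ℝ) * sigmaT2 ζ) - (N : ℝ) * (M : ℝ) * sigma2 ζ) /
    ((M : ℝ) * ((N : ℝ) * ((N : ℝ) - 1))) with ht1
  set t2 : ℝ := CW * (0 - (N : ℝ) ^ 2 * ((M : ℝ) * sigmaT2 ζ)) /
    ((M : ℝ) * ((M : ℝ) - 1) * (N : ℝ) ^ 2) with ht2
  have hW : ∀ p q : Fin M × Fin N,
      (∑ ω : DSOmega M N, ⟪dsVec c ω p.1 p.2, dsVec c ω q.1 q.2⟫)
        = if p = q then t0 else if p.1 = q.1 then t1 else t2 := by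
    intro p q
    by_cases h1 : p = q
    · subst h1
      rw [if_pos rfl]
      have hA := caseA (by omega) (by omega) c p.1 p.2
      rw [hSA] at hA
      have hnrm : ∑ ω : DSOmega M N, ⟪dsVec c ω p.1 p.2, dsVec c ω p.1 p.2⟫
          = ∑ ω : DSOmega M N, ‖dsVec c ω p.1 p.2‖ ^ 2 :=
        Finset.sum_congr rfl fun ω _ => real_inner_self_eq_norm_sq _
      rw [hnrm, ht0, hCW, eq_div_iff (mul_ne_zero hM0 hN0)]
      linarith [hA]
    · rw [if_neg h1]
      by_cases h2 : p.1 = q.1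
      · rw [if_pos h2]
        have h3 : p.2 ≠ q.2 := fun h => h1 (Prod.ext h2 h)
        have hB := caseB (by omega) c p.1 h3
        rw [hSB, hSA] at hB
        have hrw : ∑ ω : DSOmega M N, ⟪dsVec c ω p.1 p.2, dsVec c ω q.1 q.2⟫
            = ∑ ω : DSOmega M N, ⟪dsVec c ω p.1 p.2, dsVec c ω p.1 q.2⟫ := by
          rw [← h2]
        rw [hrw, ht1, hCW,
          eq_div_iff (mul_ne_zero hM0 (mul_ne_zero hN0 hN1))]
        linarith [hB]
      · rw [if_neg h2]
        have hC := caseC hM c h2 p.2 q.2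
        rw [hS0, hSB] at hC
        rw [ht2, hCW, eq_div_iff (mul_ne_zero (mul_ne_zero hM0 hM1) (pow_ne_zero 2 hN0))]
        linarith [hC]
  -- expand the squared norm of the partial sum
  have hexp : ∀ ω : DSOmega M N, ‖(k : ℝ)⁻¹ • dsPartialSum ζ ω k - zbar ζ‖ ^ 2
      = ((k : ℝ) ^ 2)⁻¹ * ‖∑ p ∈ S, dsVec c ω p.1 p.2‖ ^ 2 := by
    intro ω
    have h1 : dsPartialSum ζ ω k = ∑ p ∈ S, dsVec ζ ω p.1 p.2 := rfl
    have h2 : ∑ p ∈ S, dsVec c ω p.1 p.2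
        = (∑ p ∈ S, dsVec ζ ω p.1 p.2) - (k : ℝ) • zbar ζ := by
      have h2a : ∀ p : Fin M × Fin N, dsVec c ω p.1 p.2 = dsVec ζ ω p.1 p.2 - zbar ζ :=
        fun p => rfl
      rw [Finset.sum_congr rfl fun p _ => h2a p, Finset.sum_sub_distrib, Finset.sum_const,
        hcardS, ← Nat.cast_smul_eq_nsmul ℝ]
    have h3 : (k : ℝ)⁻¹ • (∑ p ∈ S, dsVec ζ ω p.1 p.2) - zbar ζ
        = (k : ℝ)⁻¹ • ∑ p ∈ S, dsVec c ω p.1 p.2 := by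
      rw [h2, smul_sub, smul_smul, inv_mul_cancel₀ hk0, one_smul]
    rw [h1, h3, norm_smul, Real.norm_eq_abs,
      abs_of_nonneg (inv_nonneg.mpr (Nat.cast_nonneg k)), mul_pow, inv_pow]
  -- expand into pairwise inner products
  have hpair : ∀ ω : DSOmega M N, ‖∑ p ∈ S, dsVec c ω p.1 p.2‖ ^ 2
      = ∑ p ∈ S, ∑ q ∈ S, ⟪dsVec c ω p.1 p.2, dsVec c ω q.1 q.2⟫ := by
    intro ω
    rw [← real_inner_self_eq_norm_sq, sum_inner]
    exact Finset.sum_congr rfl fun p _ => inner_sum _ _ _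
  have hswap : ∑ ω : DSOmega M N, ‖∑ p ∈ S, dsVec c ω p.1 p.2‖ ^ 2
      = ∑ p ∈ S, ∑ q ∈ S, ∑ ω : DSOmega M N, ⟪dsVec c ω p.1 p.2, dsVec c ω q.1 q.2⟫ := by
    rw [Finset.sum_congr rfl fun ω _ => hpair ω, Finset.sum_comm]
    exact Finset.sum_congr rfl fun p _ => Finset.sum_comm
  have hsplit : ∀ p q : Fin M × Fin N,
      (if p = q then t0 else if p.1 = q.1 then t1 else t2)
        = t2 + ((if p.1 = q.1 then t1 - t2 else 0) + (if p = q then t0 - t1 else 0)) := by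
    intro p q
    by_cases h1 : p = q
    · subst h1
      simp
    · by_cases h2 : p.1 = q.1 <;> simp [h1, h2]
  have hq1 : ∀ p ∈ S, ∑ q ∈ S, (t2 + ((if p.1 = q.1 then t1 - t2 else 0)
        + (if p = q then t0 - t1 else 0)))
      = (k : ℝ) * t2 + (((nb p.1 : ℕ) : ℝ) * (t1 - t2) + (t0 - t1)) := by
    intro p hp
    rw [Finset.sum_add_distrib, Finset.sum_add_distrib]
    congr 1
    · rw [Finset.sum_const, hcardS, nsmul_eq_mul]
    congr 1
    · rw [← Finset.sum_filter, Finset.sum_const, hfib p.1, nsmul_eq_mul]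
    · rw [Finset.sum_ite_eq S p (fun _ => t0 - t1), if_pos hp]
  have hIJ : ∑ p ∈ S, ∑ q ∈ S, ∑ ω : DSOmega M N, ⟪dsVec c ω p.1 p.2, dsVec c ω q.1 q.2⟫
      = (k : ℝ) * ((k : ℝ) * t2)
        + (((k / N * (N * N) + k % N * (k % N) : ℕ) : ℝ) * (t1 - t2)
          + (k : ℝ) * (t0 - t1)) := by
    calc ∑ p ∈ S, ∑ q ∈ S, ∑ ω : DSOmega M N, ⟪dsVec c ω p.1 p.2, dsVec c ω q.1 q.2⟫
        = ∑ p ∈ S, ((k : ℝ) * t2 + (((nb p.1 : ℕ) : ℝ) * (t1 - t2) + (t0 - t1))) := by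
          refine Finset.sum_congr rfl fun p hp => ?_
          rw [Finset.sum_congr rfl fun q _ => by rw [hW p q, hsplit p q], hq1 p hp]
      _ = _ := by
          rw [Finset.sum_add_distrib, Finset.sum_add_distrib, Finset.sum_const,
            Finset.sum_const, hcardS, nsmul_eq_mul, nsmul_eq_mul, ← Finset.sum_mul,
            ← Nat.cast_sum, hSnb]
  have hcardΩ : (Fintype.card (DSOmega M N) : ℝ) = CW := by
    rw [hCW]
    rw [Fintype.card_prod, Fintype.card_fun, Fintype.card_perm, Fintype.card_perm,
      Fintype.card_fin, Fintype.card_fin]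
    push_cast
    ring
  have htotal : ∑ ω : DSOmega M N, ‖(k : ℝ)⁻¹ • dsPartialSum ζ ω k - zbar ζ‖ ^ 2
      = ((k : ℝ) ^ 2)⁻¹ * ((k : ℝ) * ((k : ℝ) * t2)
          + (((k / N * (N * N) + k % N * (k % N) : ℕ) : ℝ) * (t1 - t2)
            + (k : ℝ) * (t0 - t1))) := by
    rw [Finset.sum_congr rfl fun ω _ => hexp ω, ← Finset.mul_sum, hswap, hIJ]
  rw [htotal, hcardΩ]
  rw [ht0, ht1, ht2]
  have hcast : ((k / N * (N * N) + k % N * (k % N) : ℕ) : ℝ)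
      = ((k / N : ℕ) : ℝ) * ((N : ℝ) * (N : ℝ)) + ((k % N : ℕ) : ℝ) * ((k % N : ℕ) : ℝ) := by
    push_cast
    ring
  rw [hcast]
  have hkdm : (k : ℝ) = ((k / N : ℕ) : ℝ) * (N : ℝ) + ((k % N : ℕ) : ℝ) := by
    have := Nat.div_add_mod' k N
    exact_mod_cast (congrArg (fun x : ℕ => (x : ℝ)) this).symm
  rw [hkdm] at hk0 ⊢
  field_simp
  ring

end
end

section
/- Let ζ_m^j ∈ ℝ^d for m ∈ [M], j ∈ [N] be fixed vectors, M = CR with M ≥ 2, N ≥ 2, processed by the minibatched double-shuffling procedure. Then for every k ∈ {1, …, RN}, the scaled variance of the partial sums satisfies k² · E[‖ζ̃_{π,o}^k − ζ̃‖²] ≤ (M/(2C²) + 2) N² σ̃² + (N/2) σ², where σ² = (1/(NM)) Σ_{m=1}^M Σ_{j=1}^N ‖ζ_m^j − ζ̃‖² and σ̃² = (1/M) Σ_{m=1}^M ‖ζ̃_m − ζ̃‖². -/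
open Finset
set_option linter.unusedSectionVars false
set_option linter.unusedVariables false
set_option maxHeartbeats 1000000

section PermAux
variable {α : Type*} [Fintype α] [DecidableEq α]
variable {E : Type*} [AddCommGroup E] [Module ℝ E]

lemma sum_perm_apply_congr (g : α → E) (a b : α) :
    ∑ τ : Equiv.Perm α, g (τ a) = ∑ τ : Equiv.Perm α, g (τ b) := by
  have := Equiv.sum_comp (Equiv.mulRight (Equiv.swap a b) : Equiv.Perm α ≃ Equiv.Perm α)
    (fun τ => g (τ a))
  simp only [Equiv.coe_mulRight, Equiv.Perm.mul_apply] at this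
  rw [← this]
  simp [Equiv.swap_apply_left]

lemma card_smul_sum_perm (g : α → E) (a : α) :
    (Fintype.card α : ℝ) • ∑ τ : Equiv.Perm α, g (τ a)
      = ((Fintype.card α).factorial : ℝ) • ∑ x, g x := by
  have h1 : ∑ b : α, ∑ τ : Equiv.Perm α, g (τ b)
      = (Fintype.card α) • ∑ τ : Equiv.Perm α, g (τ a) := by
    rw [Finset.sum_congr rfl (fun b _ => (sum_perm_apply_congr g a b).symm)]
    simp [Finset.sum_const, Finset.card_univ]
  have h2 : ∑ b : α, ∑ τ : Equiv.Perm α, g (τ b)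
      = ((Fintype.card α).factorial) • ∑ x, g x := by
    rw [Finset.sum_comm]
    rw [Finset.sum_congr rfl (fun τ _ => Equiv.sum_comp τ g)]
    simp [Finset.sum_const, Finset.card_univ, Fintype.card_perm]
  rw [← Nat.cast_smul_eq_nsmul ℝ] at h1 h2
  rw [← h1, h2, Nat.cast_smul_eq_nsmul]

lemma sum_perm_apply_zero (g : α → E) (hg : ∑ x, g x = 0) (a : α) :
    ∑ τ : Equiv.Perm α, g (τ a) = 0 := by
  have h := card_smul_sum_perm g a
  rw [hg, smul_zero] at h
  have hc : (Fintype.card α : ℝ) ≠ 0 := by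
    have : 0 < Fintype.card α := Fintype.card_pos_iff.mpr ⟨a⟩
    positivity
  exact (smul_eq_zero.mp h).resolve_left hc

lemma exists_perm_pair {a b c e : α} (hab : a ≠ b) (hce : c ≠ e) :
    ∃ ρ : Equiv.Perm α, ρ a = c ∧ ρ b = e := by
  classical
  set b1 := Equiv.swap a c b with hb1
  have h1 : c ≠ b1 := by
    simp only [hb1]
    intro h
    exact hab (Equiv.injective _ (by rw [← h, Equiv.swap_apply_left]))
  refine ⟨Equiv.swap b1 e * Equiv.swap a c, ?_, ?_⟩
  · simp only [Equiv.Perm.mul_apply, Equiv.swap_apply_left]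
    exact Equiv.swap_apply_of_ne_of_ne h1 hce
  · simp only [Equiv.Perm.mul_apply, ← hb1, Equiv.swap_apply_left]

lemma sum_perm_pair_congr (g : α → α → E) {a b c e : α} (hab : a ≠ b) (hce : c ≠ e) :
    ∑ τ : Equiv.Perm α, g (τ a) (τ b) = ∑ τ : Equiv.Perm α, g (τ c) (τ e) := by
  obtain ⟨ρ, h1, h2⟩ := exists_perm_pair hab hce
  have := Equiv.sum_comp (Equiv.mulRight ρ : Equiv.Perm α ≃ Equiv.Perm α)
    (fun τ => g (τ a) (τ b))
  simp only [Equiv.coe_mulRight, Equiv.Perm.mul_apply] at this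
  rw [← this, h1, h2]

lemma card_smul_sum_perm_pair (g : α → α → E) {a b : α} (hab : a ≠ b) :
    ((Fintype.card α * (Fintype.card α - 1) : ℕ) : ℝ) • ∑ τ : Equiv.Perm α, g (τ a) (τ b)
      = ((Fintype.card α).factorial : ℝ) • ∑ q ∈ Finset.univ.offDiag (α := α), g q.1 q.2 := by
  have h1 : ∑ q ∈ Finset.univ.offDiag (α := α), (∑ τ : Equiv.Perm α, g (τ q.1) (τ q.2))
      = (Finset.univ.offDiag (α := α)).card • ∑ τ : Equiv.Perm α, g (τ a) (τ b) := by
    rw [Finset.sum_congr rfl (fun q hq => sum_perm_pair_congr g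
      (Finset.mem_offDiag.mp hq).2.2 hab)]
    simp
  have hcard : (Finset.univ.offDiag (α := α)).card = Fintype.card α * (Fintype.card α - 1) := by
    rw [Finset.offDiag_card]
    simp only [Finset.card_univ]
    rw [Nat.mul_sub, mul_one]
  have h2 : ∑ q ∈ Finset.univ.offDiag (α := α), (∑ τ : Equiv.Perm α, g (τ q.1) (τ q.2))
      = ((Fintype.card α).factorial) • ∑ q ∈ Finset.univ.offDiag (α := α), g q.1 q.2 := by
    rw [Finset.sum_comm]
    have key : ∀ τ : Equiv.Perm α, ∑ q ∈ Finset.univ.offDiag (α := α), g (τ q.1) (τ q.2)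
        = ∑ q ∈ Finset.univ.offDiag (α := α), g q.1 q.2 := by
      intro τ
      refine Finset.sum_nbij' (fun q => (τ q.1, τ q.2)) (fun q => (τ⁻¹ q.1, τ⁻¹ q.2)) ?_ ?_ ?_ ?_ ?_
      · intro q hq; rw [Finset.mem_offDiag] at hq ⊢
        exact ⟨Finset.mem_univ _, Finset.mem_univ _, fun h => hq.2.2 (τ.injective h)⟩
      · intro q hq; rw [Finset.mem_offDiag] at hq ⊢
        exact ⟨Finset.mem_univ _, Finset.mem_univ _, fun h => hq.2.2 (τ⁻¹.injective h)⟩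
      · intro q hq; simp
      · intro q hq; simp
      · intro q hq; simp
    rw [Finset.sum_congr rfl (fun τ _ => key τ)]
    simp [Finset.sum_const, Finset.card_univ, Fintype.card_perm]
  rw [← Nat.cast_smul_eq_nsmul ℝ] at h2
  rw [← hcard, ← h2, h1, Nat.cast_smul_eq_nsmul]

lemma card_mul_sum_perm (g : α → ℝ) (a : α) :
    (Fintype.card α : ℝ) * ∑ τ : Equiv.Perm α, g (τ a)
      = ((Fintype.card α).factorial : ℝ) * ∑ x, g x := by
  have := card_smul_sum_perm (E := ℝ) g a
  simpa [smul_eq_mul] using this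

lemma card_mul_sum_perm_pair (g : α → α → ℝ) {a b : α} (hab : a ≠ b) :
    ((Fintype.card α * (Fintype.card α - 1) : ℕ) : ℝ) * ∑ τ : Equiv.Perm α, g (τ a) (τ b)
      = ((Fintype.card α).factorial : ℝ) * ∑ q ∈ Finset.univ.offDiag (α := α), g q.1 q.2 := by
  have := card_smul_sum_perm_pair (E := ℝ) g hab
  simpa [smul_eq_mul] using this

end PermAux
section MasterAux
variable {α : Type*} [Fintype α] [DecidableEq α]
variable {E : Type*} [NormedAddCommGroup E] [InnerProductSpace ℝ E]

lemma master_lemma (w : α → E) (hw : ∑ x, w x = 0) (c : α → ℝ) (h2 : 2 ≤ Fintype.card α) :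
    ((Fintype.card α : ℝ) * ((Fintype.card α : ℝ) - 1)) *
        ∑ τ : Equiv.Perm α, ‖∑ a, c a • w (τ a)‖ ^ 2
      = ((Fintype.card α).factorial : ℝ) *
          (((Fintype.card α : ℝ) * ∑ a, (c a) ^ 2 - (∑ a, c a) ^ 2) * ∑ x, ‖w x‖ ^ 2) := by
  set n := Fintype.card α with hn
  have hncast : ((n * (n - 1) : ℕ) : ℝ) = (n : ℝ) * ((n : ℝ) - 1) := by
    push_cast [Nat.cast_sub (by omega : 1 ≤ n)]
    ring
  have hexp : ∀ τ : Equiv.Perm α, ‖∑ a, c a • w (τ a)‖ ^ 2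
      = ∑ q ∈ (Finset.univ ×ˢ Finset.univ : Finset (α × α)),
          (c q.1 * c q.2) * (inner ℝ (w (τ q.1)) (w (τ q.2)) : ℝ) := by
    intro τ
    rw [← real_inner_self_eq_norm_sq, sum_inner, Finset.sum_product]
    refine Finset.sum_congr rfl fun a _ => ?_
    rw [inner_sum]
    refine Finset.sum_congr rfl fun b _ => ?_
    rw [real_inner_smul_left, real_inner_smul_right]
    ring
  rw [Finset.sum_congr rfl (fun τ _ => hexp τ), Finset.sum_comm, Finset.mul_sum]
  rw [← Finset.diag_union_offDiag (Finset.univ : Finset α),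
    Finset.sum_union (Finset.disjoint_diag_offDiag _)]
  have hQ : ∑ x, ‖w x‖ ^ 2 = ∑ x, (inner ℝ (w x) (w x) : ℝ) := by
    refine Finset.sum_congr rfl fun x _ => (real_inner_self_eq_norm_sq _).symm
  have hdiag : ∑ q ∈ (Finset.univ : Finset α).diag,
      ((n : ℝ) * ((n : ℝ) - 1)) * ∑ τ : Equiv.Perm α, (c q.1 * c q.2) * (inner ℝ (w (τ q.1)) (w (τ q.2)) : ℝ)
      = ((n : ℝ) - 1) * (n.factorial : ℝ) * (∑ a, (c a) ^ 2) * ∑ x, ‖w x‖ ^ 2 := by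
    rw [Finset.sum_diag]
    have key : ∀ a : α, ∑ τ : Equiv.Perm α, (c a * c a) * (inner ℝ (w (τ a)) (w (τ a)) : ℝ)
        = (c a) ^ 2 * ∑ τ : Equiv.Perm α, (inner ℝ (w (τ a)) (w (τ a)) : ℝ) := by
      intro a; rw [Finset.mul_sum]; exact Finset.sum_congr rfl fun τ _ => by ring
    have key2 : ∀ a : α, (n : ℝ) * ∑ τ : Equiv.Perm α, (inner ℝ (w (τ a)) (w (τ a)) : ℝ)
        = (n.factorial : ℝ) * ∑ x, (inner ℝ (w x) (w x) : ℝ) :=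
      fun a => card_mul_sum_perm (fun x => (inner ℝ (w x) (w x) : ℝ)) a
    calc ∑ a, ((n : ℝ) * ((n : ℝ) - 1)) * ∑ τ : Equiv.Perm α, (c a * c a) * (inner ℝ (w (τ a)) (w (τ a)) : ℝ)
        = ∑ a, ((n : ℝ) - 1) * (c a) ^ 2 * ((n : ℝ) * ∑ τ : Equiv.Perm α, (inner ℝ (w (τ a)) (w (τ a)) : ℝ)) := by
          refine Finset.sum_congr rfl fun a _ => ?_
          rw [key a]; ring
      _ = ∑ a, ((n : ℝ) - 1) * (c a) ^ 2 * ((n.factorial : ℝ) * ∑ x, (inner ℝ (w x) (w x) : ℝ)) := by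
          refine Finset.sum_congr rfl fun a _ => by rw [key2 a]
      _ = (∑ a, (c a) ^ 2) * (((n : ℝ) - 1) * ((n.factorial : ℝ) * ∑ x, (inner ℝ (w x) (w x) : ℝ))) := by
          rw [Finset.sum_mul]
          exact Finset.sum_congr rfl fun a _ => by ring
      _ = ((n : ℝ) - 1) * (n.factorial : ℝ) * (∑ a, (c a) ^ 2) * ∑ x, ‖w x‖ ^ 2 := by
          rw [hQ]; ring
  have hP : ∑ q ∈ (Finset.univ : Finset α).offDiag, (inner ℝ (w q.1) (w q.2) : ℝ)
      = - ∑ x, ‖w x‖ ^ 2 := by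
    have hall : ∑ q ∈ (Finset.univ ×ˢ Finset.univ : Finset (α × α)), (inner ℝ (w q.1) (w q.2) : ℝ)
        = 0 := by
      rw [Finset.sum_product]
      rw [Finset.sum_congr rfl fun a _ => (inner_sum Finset.univ w (w a)).symm]
      simp [hw]
    rw [← Finset.diag_union_offDiag (Finset.univ : Finset α),
      Finset.sum_union (Finset.disjoint_diag_offDiag _), Finset.sum_diag] at hall
    rw [hQ]
    linarith [hall]
  have hoff : ∑ q ∈ (Finset.univ : Finset α).offDiag,
      ((n : ℝ) * ((n : ℝ) - 1)) * ∑ τ : Equiv.Perm α, (c q.1 * c q.2) * (inner ℝ (w (τ q.1)) (w (τ q.2)) : ℝ)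
      = (n.factorial : ℝ) * (((∑ a, c a) ^ 2 - ∑ a, (c a) ^ 2)) * (- ∑ x, ‖w x‖ ^ 2) := by
    have key : ∀ q ∈ (Finset.univ : Finset α).offDiag,
        ((n : ℝ) * ((n : ℝ) - 1)) * ∑ τ : Equiv.Perm α, (c q.1 * c q.2) * (inner ℝ (w (τ q.1)) (w (τ q.2)) : ℝ)
        = (c q.1 * c q.2) * ((n.factorial : ℝ) * ∑ q ∈ (Finset.univ : Finset α).offDiag, (inner ℝ (w q.1) (w q.2) : ℝ)) := by
      intro q hq
      have hne := (Finset.mem_offDiag.mp hq).2.2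
      have hpair := card_mul_sum_perm_pair (fun x y => (inner ℝ (w x) (w y) : ℝ)) hne
      rw [hncast] at hpair
      calc ((n : ℝ) * ((n : ℝ) - 1)) * ∑ τ : Equiv.Perm α, (c q.1 * c q.2) * (inner ℝ (w (τ q.1)) (w (τ q.2)) : ℝ)
          = (c q.1 * c q.2) * (((n : ℝ) * ((n : ℝ) - 1)) * ∑ τ : Equiv.Perm α, (inner ℝ (w (τ q.1)) (w (τ q.2)) : ℝ)) := by
            rw [Finset.mul_sum, Finset.mul_sum, Finset.mul_sum]
            refine Finset.sum_congr rfl fun τ _ => by ring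
        _ = (c q.1 * c q.2) * ((n.factorial : ℝ) * ∑ q ∈ (Finset.univ : Finset α).offDiag, (inner ℝ (w q.1) (w q.2) : ℝ)) := by
            rw [hpair]
    rw [Finset.sum_congr rfl key, hP, ← Finset.sum_mul]
    have hsq : ∑ q ∈ (Finset.univ : Finset α).offDiag, (c q.1 * c q.2)
        = (∑ a, c a) ^ 2 - ∑ a, (c a) ^ 2 := by
      have hall : ∑ q ∈ (Finset.univ ×ˢ Finset.univ : Finset (α × α)), (c q.1 * c q.2)
          = (∑ a, c a) ^ 2 := by
        rw [Finset.sum_product, sq, Finset.sum_mul_sum]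
      rw [← Finset.diag_union_offDiag (Finset.univ : Finset α),
        Finset.sum_union (Finset.disjoint_diag_offDiag _), Finset.sum_diag] at hall
      have hd : ∑ a, (c a * c a) = ∑ a, (c a) ^ 2 :=
        Finset.sum_congr rfl fun a _ => (sq (c a)).symm
      linarith [hall]
    rw [hsq]; ring
  rw [hdiag, hoff]
  ring

lemma sum_perm_comb_zero (w : α → E) (hw : ∑ x, w x = 0) (s : Finset α) :
    ∑ τ : Equiv.Perm α, ∑ a ∈ s, w (τ a) = 0 := by
  rw [Finset.sum_comm]
  exact Finset.sum_eq_zero fun a _ => sum_perm_apply_zero w hw a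

end MasterAux

section FnAux

lemma sum_fn_apply {ι : Type*} [Fintype ι] [DecidableEq ι] {P : Type*} [Fintype P]
    [DecidableEq P] {E : Type*} [AddCommMonoid E] (m : ι) (h : P → E) :
    ∑ σ : ι → P, h (σ m)
      = (Fintype.card P ^ (Fintype.card ι - 1)) • ∑ τ : P, h τ := by
  classical
  rw [← Equiv.sum_comp (Equiv.funSplitAt m P).symm (fun σ => h (σ m))]
  have happ : ∀ q : P × ({ j // j ≠ m } → P), ((Equiv.funSplitAt m P).symm q) m = q.1 := by
    intro q
    simp [Equiv.funSplitAt]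
  rw [Finset.sum_congr rfl (fun q _ => by rw [happ q])]
  rw [Fintype.sum_prod_type_right]
  have hcard : Fintype.card ({ j // j ≠ m } → P) = Fintype.card P ^ (Fintype.card ι - 1) := by
    rw [Fintype.card_fun]
    congr 1
    rw [Fintype.card_subtype_compl, Fintype.card_subtype_eq]
  rw [← hcard]
  simp [Finset.sum_const, Finset.card_univ, Finset.smul_sum]

lemma filter_fin_lt_eq {n r : ℕ} (h : r ≤ n) :
    (Finset.univ.filter (fun j : Fin n => (j : ℕ) < r))
      = (Finset.range r).attachFin
          (fun m hm => lt_of_lt_of_le (Finset.mem_range.mp hm) h) := by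
  ext j
  simp [Finset.mem_attachFin]

lemma card_filter_fin_lt {n r : ℕ} (h : r ≤ n) :
    (Finset.univ.filter (fun j : Fin n => (j : ℕ) < r)).card = r := by
  rw [filter_fin_lt_eq h, Finset.card_attachFin, Finset.card_range]

end FnAux

lemma final_ineq (Mr Nr Cr Rr br rr s2 st2 : ℝ)
    (hM2 : 2 ≤ Mr) (hN2 : 2 ≤ Nr) (hC : 1 ≤ Cr) (hMCR : Mr = Cr * Rr)
    (hb0 : 0 ≤ br) (hbR : br ≤ Rr) (hr0 : 0 ≤ rr) (hrN : rr ≤ Nr)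
    (hst : 0 ≤ st2) (hs : st2 ≤ s2) :
    (Mr * (br * Nr ^ 2 / Cr + rr ^ 2) - (br * Nr + rr) ^ 2) * st2 / (Mr - 1)
        + rr * (Nr - rr) * (s2 - st2) / (Nr - 1)
      ≤ (Mr / (2 * Cr ^ 2) + 2) * Nr ^ 2 * st2 + Nr / 2 * s2 := by
  have hM1 : (0:ℝ) < Mr - 1 := by linarith
  have hN1 : (0:ℝ) < Nr - 1 := by linarith
  have hC0 : (0:ℝ) < Cr := by linarith
  -- second summand
  have step2 : rr * (Nr - rr) * (s2 - st2) / (Nr - 1) ≤ Nr / 2 * s2 := by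
    have hcoef : rr * (Nr - rr) / (Nr - 1) ≤ Nr / 2 := by
      rw [div_le_div_iff₀ hN1 two_pos]
      nlinarith [sq_nonneg (Nr - 2 * rr)]
    have hcp : 0 ≤ rr * (Nr - rr) / (Nr - 1) := by
      have : 0 ≤ rr * (Nr - rr) := mul_nonneg hr0 (by linarith)
      positivity
    calc rr * (Nr - rr) * (s2 - st2) / (Nr - 1)
        = (rr * (Nr - rr) / (Nr - 1)) * (s2 - st2) := by ring
      _ ≤ (Nr / 2) * (s2 - st2) := mul_le_mul_of_nonneg_right hcoef (by linarith) |>.trans_eq rfl |>.trans (by nlinarith)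
      _ ≤ Nr / 2 * s2 := by nlinarith
  -- first summand
  have step1 : (Mr * (br * Nr ^ 2 / Cr + rr ^ 2) - (br * Nr + rr) ^ 2) * st2 / (Mr - 1)
      ≤ (Mr / (2 * Cr ^ 2) + 2) * Nr ^ 2 * st2 := by
    have ha : Mr * (br * Nr ^ 2 / Cr) - (br * Nr) ^ 2
        = Nr ^ 2 / Cr ^ 2 * (br * Cr * (Mr - br * Cr)) := by
      field_simp
    have hb : br * Cr * (Mr - br * Cr) ≤ Mr * (Mr - 1) / 2 := by
      nlinarith [sq_nonneg (Mr - 2 * br * Cr)]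
    have h1 : Mr * (br * Nr ^ 2 / Cr) - (br * Nr) ^ 2
        ≤ Nr ^ 2 / Cr ^ 2 * (Mr * (Mr - 1) / 2) := by
      rw [ha]
      exact mul_le_mul_of_nonneg_left hb (by positivity)
    have h2 : (Mr / (2 * Cr ^ 2)) * Nr ^ 2 * (Mr - 1) = Nr ^ 2 / Cr ^ 2 * (Mr * (Mr - 1) / 2) := by
      field_simp
    have hr2 : rr ^ 2 ≤ Nr ^ 2 := by nlinarith
    have hrr2 : Mr * rr ^ 2 - rr ^ 2 ≤ (Mr - 1) * Nr ^ 2 := by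
      nlinarith [mul_le_mul_of_nonneg_left hr2 (le_of_lt hM1)]
    have hcross : 0 ≤ 2 * (br * Nr) * rr := by positivity
    have hkey : Mr * (br * Nr ^ 2 / Cr + rr ^ 2) - (br * Nr + rr) ^ 2
        ≤ (Mr / (2 * Cr ^ 2) + 2) * Nr ^ 2 * (Mr - 1) := by
      have hexp : (Mr / (2 * Cr ^ 2) + 2) * Nr ^ 2 * (Mr - 1)
          = (Mr / (2 * Cr ^ 2)) * Nr ^ 2 * (Mr - 1) + 2 * Nr ^ 2 * (Mr - 1) := by ring
      rw [hexp, h2]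
      nlinarith [h1, hrr2, hcross]
    rw [div_le_iff₀ hM1] at *
    calc (Mr * (br * Nr ^ 2 / Cr + rr ^ 2) - (br * Nr + rr) ^ 2) * st2
        ≤ ((Mr / (2 * Cr ^ 2) + 2) * Nr ^ 2 * (Mr - 1)) * st2 := mul_le_mul_of_nonneg_right hkey hst
      _ = (Mr / (2 * Cr ^ 2) + 2) * Nr ^ 2 * st2 * (Mr - 1) := by ring
  linarith
noncomputable section


/-- The index (in `[M]`) of the `b`-th slot of group `p`, when `M = C·R` clients are split
into `C` groups of `R` clients. -/
def groupIdx {M C R : ℕ} (hM : M = C * R) (p : Fin C) (b : Fin R) : Fin M :=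
  ⟨(p : ℕ) * R + (b : ℕ), by
    have h1 : (p : ℕ) * R + (b : ℕ) < ((p : ℕ) + 1) * R := by
      calc (p : ℕ) * R + (b : ℕ) < (p : ℕ) * R + R := Nat.add_lt_add_left b.isLt _
        _ = ((p : ℕ) + 1) * R := by ring
    have h2 : ((p : ℕ) + 1) * R ≤ C * R := by gcongr; exact Nat.succ_le_of_lt p.isLt
    exact h1.trans_le (h2.trans_eq hM.symm)⟩

/-- The vector processed by group `p` at block `b`, within-block position `j`. -/
def mbVec {d M N C R : ℕ} (ζ : Fin M → Fin N → Vec d) (hM : M = C * R)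
    (ω : DSOmega M N) (p : Fin C) (b : Fin R) (j : Fin N) : Vec d :=
  ζ (ω.1 (groupIdx hM p b)) (ω.2 (ω.1 (groupIdx hM p b)) j)

/-- The sum of the vectors processed by group `p` at (0-based) positions in `[lo, hi)`. -/
def mbWindowSum {d M N C R : ℕ} (ζ : Fin M → Fin N → Vec d) (hM : M = C * R)
    (ω : DSOmega M N) (p : Fin C) (lo hi : ℕ) : Vec d :=
  ∑ q ∈ Finset.univ.filter (fun q : Fin R × Fin N =>
      lo ≤ (q.1 : ℕ) * N + (q.2 : ℕ) ∧ (q.1 : ℕ) * N + (q.2 : ℕ) < hi),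
    mbVec ζ hM ω p q.1 q.2

/-- The minibatched double-shuffling estimator
`ζ̃_{π,o}^k = (1/k)( Σ_{i=1}^{k_N} (1/C) Σ_{p=1}^C ζ^p_{π_i} + Σ_{i=k_N+1}^{k} ζ^o_{π_i} )`
with `k_N = ⌊k/N⌋·N`. -/
def mbEst {d M N C R : ℕ} (ζ : Fin M → Fin N → Vec d) (hM : M = C * R)
    (ω : DSOmega M N) (o : Fin C) (k : ℕ) : Vec d :=
  (k : ℝ)⁻¹ • ((C : ℝ)⁻¹ • ∑ p : Fin C, mbWindowSum ζ hM ω p 0 (k / N * N)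
    + mbWindowSum ζ hM ω o (k / N * N) k)

/-- For the minibatched double-shuffling procedure with `M = C·R`,
`M ≥ 2`, `N ≥ 2`, for every `k ∈ {1, …, RN}` (and every group index `o`),
`k² · E[‖ζ̃_{π,o}^k − ζ̃‖²] ≤ (M/(2C²) + 2) N² σ̃² + (N/2) σ²`. -/
theorem statement6 (d M N C R : ℕ) (hM : M = C * R) (hM2 : 2 ≤ M) (hN : 2 ≤ N)
    (hC : 0 < C) (hR : 0 < R)
    (ζ : Fin M → Fin N → Vec d) (o : Fin C) (k : ℕ) (hk1 : 1 ≤ k) (hk2 : k ≤ R * N) :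
    (k : ℝ) ^ 2 * ((Fintype.card (DSOmega M N) : ℝ)⁻¹ *
        ∑ ω : DSOmega M N, ‖mbEst ζ hM ω o k - zbar ζ‖ ^ 2)
      ≤ ((M : ℝ) / (2 * (C : ℝ) ^ 2) + 2) * (N : ℝ) ^ 2 * sigmaT2 ζ
        + (N : ℝ) / 2 * sigma2 ζ := by
  classical
  have hN0 : 0 < N := by omega
  have hM0 : 0 < M := by omega
  have hk0 : (k : ℝ) ≠ 0 := Nat.cast_ne_zero.mpr (by omega)
  set b := k / N with hbdef
  set r := k % N with hrdef
  have hk : N * b + r = k := Nat.div_add_mod k N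
  have hrN : r < N := Nat.mod_lt _ hN0
  have hbR : b ≤ R := by
    rw [hbdef]
    calc k / N ≤ R * N / N := Nat.div_le_div_right hk2
      _ = R := Nat.mul_div_cancel _ hN0
  have hbRr : b = R → r = 0 := by
    intro h
    rw [h] at hk
    have hcomm : N * R = R * N := Nat.mul_comm N R
    omega
  clear_value b r
  -- basic objects
  set u : Fin M → Vec d := fun m => zbarC ζ m - zbar ζ with hu
  set v : Fin M → Fin N → Vec d := fun m j => ζ m j - zbarC ζ m with hv
  set e : Fin C × Fin R ≃ Fin M := finProdFinEquiv.trans (finCongr hM.symm) with he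
  have heq : ∀ (p : Fin C) (b' : Fin R), e (p, b') = groupIdx hM p b' := by
    intro p b'
    apply Fin.ext
    show ((finProdFinEquiv.trans (finCongr hM.symm)) (p, b') : Fin M).val = _
    simp [finProdFinEquiv, groupIdx]
    ring
  set cf : Fin C × Fin R → ℝ := fun q =>
    (if (q.2 : ℕ) < b then (N : ℝ) / C else 0)
      + (if ((q.2 : ℕ) = b ∧ q.1 = o) then (r : ℝ) else 0) with hcf
  set cc : Fin M → ℝ := fun i => cf (e.symm i) with hcc
  have hc : ∀ q, cc (e q) = cf q := fun q => by simp [hcc]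
  set A : Equiv.Perm (Fin M) → Vec d := fun π => ∑ i, cc i • u (π i) with hA
  set fR := Finset.univ.filter (fun b' : Fin R => (b' : ℕ) < b) with hfRdef
  set fN := Finset.univ.filter (fun j : Fin N => (j : ℕ) < r) with hfNdef
  have hfRcard : fR.card = b := card_filter_fin_lt hbR
  have hfNcard : fN.card = r := card_filter_fin_lt hrN.le
  -- zero-sum facts
  have husum : ∑ m, u m = 0 := by
    simp only [hu, zbarC, zbar]
    rw [Finset.sum_sub_distrib, ← Finset.smul_sum, Finset.sum_const, Finset.card_univ,
      Fintype.card_fin, sub_eq_zero, ← Nat.cast_smul_eq_nsmul ℝ, smul_smul]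
    congr 1
    have hMne : (M:ℝ) ≠ 0 := by positivity
    field_simp
  have hvsum : ∀ m, ∑ j, v m j = 0 := by
    intro m
    simp only [hv, zbarC]
    rw [Finset.sum_sub_distrib, Finset.sum_const, Finset.card_univ, Fintype.card_fin,
      sub_eq_zero, ← Nat.cast_smul_eq_nsmul ℝ, smul_smul,
      mul_inv_cancel₀ (by positivity : (N:ℝ) ≠ 0), one_smul]
  have hzbarC : ∀ m, zbarC ζ m = u m + zbar ζ := by
    intro m; simp only [hu]; abel
  have hzeta : ∀ m j, ζ m j = v m j + (u m + zbar ζ) := by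
    intro m j; simp only [hu, hv]; abel
  -- variance facts
  have hQu : ∑ m, ‖u m‖ ^ 2 = M * sigmaT2 ζ := by
    rw [sigmaT2, ← mul_assoc, mul_inv_cancel₀ (by positivity : (M:ℝ) ≠ 0), one_mul]
  have hQv : ∑ m, ∑ j, ‖v m j‖ ^ 2 = N * M * (sigma2 ζ - sigmaT2 ζ) := by
    have key : ∀ m, ∑ j, ‖ζ m j - zbar ζ‖ ^ 2 = (∑ j, ‖v m j‖ ^ 2) + N * ‖u m‖ ^ 2 := by
      intro m
      have h1 : ∀ j, ζ m j - zbar ζ = v m j + u m := by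
        intro j; simp only [hu, hv]; abel
      calc ∑ j, ‖ζ m j - zbar ζ‖ ^ 2
          = ∑ j, (‖v m j‖ ^ 2 + 2 * (inner ℝ (v m j) (u m) : ℝ) + ‖u m‖ ^ 2) := by
            refine Finset.sum_congr rfl fun j _ => ?_
            rw [h1 j, norm_add_sq_real]
        _ = (∑ j, ‖v m j‖ ^ 2) + 2 * (inner ℝ (∑ j, v m j) (u m) : ℝ) + N * ‖u m‖ ^ 2 := by
            rw [Finset.sum_add_distrib, Finset.sum_add_distrib, Finset.sum_const,
              Finset.card_univ, Fintype.card_fin, ← Finset.mul_sum, ← sum_inner,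
              nsmul_eq_mul]
        _ = (∑ j, ‖v m j‖ ^ 2) + N * ‖u m‖ ^ 2 := by
            rw [hvsum m, inner_zero_left]; ring
    have hs2 : ∑ m, ∑ j, ‖ζ m j - zbar ζ‖ ^ 2 = N * M * sigma2 ζ := by
      rw [sigma2, ← mul_assoc, mul_inv_cancel₀ (by positivity : (N:ℝ) * M ≠ 0), one_mul]
    have h3 : ∑ m, ∑ j, ‖ζ m j - zbar ζ‖ ^ 2
        = (∑ m, ∑ j, ‖v m j‖ ^ 2) + N * ∑ m, ‖u m‖ ^ 2 := by
      rw [Finset.sum_congr rfl fun m _ => key m, Finset.sum_add_distrib, Finset.mul_sum]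
    rw [hs2, hQu] at h3
    linarith
  have hst0 : 0 ≤ sigmaT2 ζ := by
    rw [sigmaT2]
    positivity
  have hsdiff : sigmaT2 ζ ≤ sigma2 ζ := by
    have h1 : (0:ℝ) ≤ ∑ m, ∑ j, ‖v m j‖ ^ 2 := by positivity
    rw [hQv] at h1
    have h2 : (0:ℝ) < N * M := by positivity
    nlinarith
  -- coefficient sums
  have hkr : (N : ℝ) * (b : ℝ) + (r : ℝ) = (k : ℝ) := by exact_mod_cast hk
  have hCne : (C:ℝ) ≠ 0 := by positivity
  have hsum2 : ∀ x : ℝ, (r = 0 → x = 0) →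
      ∑ q : Fin C × Fin R, (if ((q.2 : ℕ) = b ∧ q.1 = o) then x else 0) = x := by
    intro x hx
    rcases Nat.lt_or_ge b R with hb | hb
    · rw [Finset.sum_eq_single ((o, ⟨b, hb⟩) : Fin C × Fin R)]
      · simp
      · rintro q - hq
        rw [if_neg]
        rintro ⟨h1, h2⟩
        exact hq (by
          apply Prod.ext
          · exact h2
          · exact Fin.ext h1)
      · intro h; exact absurd (Finset.mem_univ _) h
    · rw [hx (hbRr (le_antisymm hbR hb))]
      simp
  have hsumfR : ∀ x : ℝ, ∑ b' : Fin R, (if (b' : ℕ) < b then x else 0) = (b : ℝ) * x := by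
    intro x
    rw [← Finset.sum_filter, ← hfRdef, Finset.sum_const, hfRcard, nsmul_eq_mul]
  have hccq : ∑ i, cc i = ∑ q : Fin C × Fin R, cf q := by
    rw [← Equiv.sum_comp e cc]
    exact Finset.sum_congr rfl fun q _ => hc q
  have hccq2 : ∑ i, (cc i) ^ 2 = ∑ q : Fin C × Fin R, (cf q) ^ 2 := by
    rw [← Equiv.sum_comp e (fun i => (cc i) ^ 2)]
    exact Finset.sum_congr rfl fun q _ => by rw [hc q]
  have hSc : ∑ i, cc i = (k : ℝ) := by
    rw [hccq]
    simp only [hcf]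
    rw [Finset.sum_add_distrib, hsum2 (r : ℝ) (fun h => by rw [h]; simp),
      Fintype.sum_prod_type]
    rw [Finset.sum_congr rfl fun p _ => hsumfR ((N:ℝ)/C), Finset.sum_const,
      Finset.card_univ, Fintype.card_fin, nsmul_eq_mul]
    field_simp
    linarith [hkr]
  have hSc2 : ∑ i, (cc i) ^ 2 = (b : ℝ) * (N : ℝ) ^ 2 / C + (r : ℝ) ^ 2 := by
    rw [hccq2]
    have hcfsq : ∀ q : Fin C × Fin R, (cf q) ^ 2
        = (if (q.2 : ℕ) < b then ((N : ℝ)/C) ^ 2 else 0)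
          + (if ((q.2 : ℕ) = b ∧ q.1 = o) then (r : ℝ) ^ 2 else 0) := by
      intro q
      by_cases h1 : (q.2 : ℕ) < b
      · have h2 : ¬((q.2 : ℕ) = b ∧ q.1 = o) := by rintro ⟨h, -⟩; omega
        simp [hcf, h1, h2]
      · by_cases h2 : ((q.2 : ℕ) = b ∧ q.1 = o)
        · simp [hcf, h1, h2]
        · simp [hcf, h1, h2]
    rw [Finset.sum_congr rfl fun q _ => hcfsq q]
    rw [Finset.sum_add_distrib, hsum2 ((r : ℝ) ^ 2) (fun h => by rw [h]; simp),
      Fintype.sum_prod_type]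
    rw [Finset.sum_congr rfl fun p _ => hsumfR (((N:ℝ)/C) ^ 2), Finset.sum_const,
      Finset.card_univ, Fintype.card_fin, nsmul_eq_mul]
    field_simp
  -- window sums
  have hwin1 : ∀ (ω : DSOmega M N) (p : Fin C),
      mbWindowSum ζ hM ω p 0 (b * N)
        = ∑ b' ∈ fR, (N : ℝ) • zbarC ζ (ω.1 (groupIdx hM p b')) := by
    intro ω p
    rw [mbWindowSum]
    have hfilter : Finset.univ.filter (fun q : Fin R × Fin N =>
        0 ≤ (q.1 : ℕ) * N + (q.2 : ℕ) ∧ (q.1 : ℕ) * N + (q.2 : ℕ) < b * N)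
        = fR ×ˢ Finset.univ := by
      ext q
      simp only [Finset.mem_filter, Finset.mem_product, Finset.mem_univ, true_and, and_true,
        hfRdef]
      constructor
      · rintro ⟨-, h⟩
        by_contra hcon
        push_neg at hcon
        have h2 : b * N ≤ (q.1 : ℕ) * N := Nat.mul_le_mul_right N hcon
        omega
      · intro h
        refine ⟨Nat.zero_le _, ?_⟩
        have h1 : ((q.1 : ℕ) + 1) * N ≤ b * N := Nat.mul_le_mul_right N h
        have h2 := q.2.isLt
        calc (q.1 : ℕ) * N + (q.2 : ℕ) < (q.1 : ℕ) * N + N := by omega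
          _ = ((q.1 : ℕ) + 1) * N := by ring
          _ ≤ b * N := h1
    rw [hfilter, Finset.sum_product]
    refine Finset.sum_congr rfl fun b' _ => ?_
    show ∑ j, mbVec ζ hM (ω.1, ω.2) p b' j = _
    simp only [mbVec]
    rw [Equiv.sum_comp (ω.2 (ω.1 (groupIdx hM p b'))) (ζ (ω.1 (groupIdx hM p b')))]
    rw [zbarC, smul_smul, mul_inv_cancel₀ (by positivity : (N:ℝ) ≠ 0), one_smul]
  -- the recentered process
  set V : DSOmega M N → Vec d := fun ω =>
    (C : ℝ)⁻¹ • ∑ p : Fin C, mbWindowSum ζ hM ω p 0 (b * N)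
      + mbWindowSum ζ hM ω o (b * N) k - (k : ℝ) • zbar ζ with hV
  have hred : ∀ ω, mbEst ζ hM ω o k - zbar ζ = (k : ℝ)⁻¹ • V ω := by
    intro ω
    rw [mbEst, hV]
    rw [← hbdef, smul_sub, smul_smul, inv_mul_cancel₀ hk0, one_smul]
  have hLHS : (k : ℝ) ^ 2 * ((Fintype.card (DSOmega M N) : ℝ)⁻¹ *
        ∑ ω : DSOmega M N, ‖mbEst ζ hM ω o k - zbar ζ‖ ^ 2)
      = (Fintype.card (DSOmega M N) : ℝ)⁻¹ * ∑ ω : DSOmega M N, ‖V ω‖ ^ 2 := by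
    have hsq : ∀ ω, ‖mbEst ζ hM ω o k - zbar ζ‖ ^ 2 = ((k:ℝ) ^ 2)⁻¹ * ‖V ω‖ ^ 2 := by
      intro ω
      rw [hred ω, norm_smul, mul_pow, norm_inv, Real.norm_natCast, inv_pow]
    rw [Finset.sum_congr rfl fun ω _ => hsq ω, ← Finset.mul_sum]
    field_simp
  rw [hLHS]
  clear hbdef hrdef
  -- expansion of A
  have hA_expand : ∀ π : Equiv.Perm (Fin M), A π
      = ((N : ℝ) / C) • (∑ p : Fin C, ∑ b' ∈ fR, u (π (groupIdx hM p b')))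
        + ∑ q : Fin C × Fin R,
            (if ((q.2 : ℕ) = b ∧ q.1 = o) then (r : ℝ) else 0) • u (π (e q)) := by
    intro π
    have h0 : A π = ∑ q : Fin C × Fin R, cf q • u (π (e q)) := by
      show ∑ i : Fin M, cc i • u (π i) = ∑ q : Fin C × Fin R, cf q • u (π (e q))
      rw [← Equiv.sum_comp e (fun i => cc i • u (π i))]
      exact Finset.sum_congr rfl fun q _ => by rw [hc q]
    rw [h0]
    have h1 : ∀ q : Fin C × Fin R, cf q • u (π (e q))
        = (if (q.2 : ℕ) < b then (N : ℝ)/C else 0) • u (π (e q))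
          + (if ((q.2 : ℕ) = b ∧ q.1 = o) then (r : ℝ) else 0) • u (π (e q)) := by
      intro q
      rw [hcf]
      exact add_smul _ _ _
    rw [Finset.sum_congr rfl fun q _ => h1 q, Finset.sum_add_distrib]
    congr 1
    rw [Fintype.sum_prod_type, Finset.smul_sum]
    refine Finset.sum_congr rfl fun p _ => ?_
    calc ∑ b' : Fin R, (if (b' : ℕ) < b then (N:ℝ)/C else 0) • u (π (e (p, b')))
        = ∑ b' : Fin R, (if (b' : ℕ) < b then ((N:ℝ)/C) • u (π (groupIdx hM p b')) else 0) := by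
          refine Finset.sum_congr rfl fun b' _ => ?_
          rw [heq p b', ite_smul, zero_smul]
      _ = ∑ b' ∈ fR, ((N:ℝ)/C) • u (π (groupIdx hM p b')) := by
          rw [hfRdef, Finset.sum_filter]
      _ = ((N:ℝ)/C) • ∑ b' ∈ fR, u (π (groupIdx hM p b')) := by rw [Finset.smul_sum]
  -- first part of V
  have hV1 : ∀ ω : DSOmega M N,
      (C : ℝ)⁻¹ • ∑ p : Fin C, mbWindowSum ζ hM ω p 0 (b * N)
        = ((N : ℝ) / C) • (∑ p : Fin C, ∑ b' ∈ fR, u (ω.1 (groupIdx hM p b')))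
          + ((b : ℝ) * (N : ℝ)) • zbar ζ := by
    intro ω
    rw [Finset.sum_congr rfl fun p _ => hwin1 ω p]
    have hsplit : ∀ p : Fin C, ∑ b' ∈ fR, (N:ℝ) • zbarC ζ (ω.1 (groupIdx hM p b'))
        = (N:ℝ) • (∑ b' ∈ fR, u (ω.1 (groupIdx hM p b'))) + ((b:ℝ) * N) • zbar ζ := by
      intro p
      rw [Finset.sum_congr rfl fun b' _ => by
        rw [hzbarC (ω.1 (groupIdx hM p b')), smul_add]]
      rw [Finset.sum_add_distrib, Finset.sum_const, hfRcard, ← Finset.smul_sum]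
      congr 1
      rw [← Nat.cast_smul_eq_nsmul ℝ, smul_smul]
    rw [Finset.sum_congr rfl fun p _ => hsplit p, Finset.sum_add_distrib, Finset.sum_const,
      Finset.card_univ, Fintype.card_fin, smul_add]
    congr 1
    · rw [← Finset.smul_sum, smul_smul, inv_mul_eq_div]
    · rw [← Nat.cast_smul_eq_nsmul ℝ, smul_smul, smul_smul,
        inv_mul_cancel₀ hCne, one_mul]
  -- master identity for A
  have hMA : ((M : ℝ) * ((M : ℝ) - 1)) * ∑ π : Equiv.Perm (Fin M), ‖A π‖ ^ 2
      = (M.factorial : ℝ) *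
          (((M : ℝ) * ((b : ℝ) * (N : ℝ) ^ 2 / C + (r : ℝ) ^ 2) - (k : ℝ) ^ 2)
            * ((M : ℝ) * sigmaT2 ζ)) := by
    have := master_lemma u husum cc (by simpa using hM2)
    simp only [Fintype.card_fin] at this
    rw [hSc, hSc2, hQu] at this
    exact this
  have hcardOmega : (Fintype.card (DSOmega M N) : ℝ)
      = (M.factorial : ℝ) * (N.factorial : ℝ) ^ M := by
    have h : Fintype.card (DSOmega M N) = M.factorial * N.factorial ^ M := by
      rw [Fintype.card_prod, Fintype.card_fun, Fintype.card_perm, Fintype.card_perm,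
        Fintype.card_fin, Fintype.card_fin]
    rw [h]
    push_cast
    ring
  have hMM1 : ((M:ℝ) * ((M:ℝ) - 1)) ≠ 0 := by
    have h1 : (2:ℝ) ≤ (M:ℝ) := by exact_mod_cast hM2
    have : (0:ℝ) < (M:ℝ) * ((M:ℝ) - 1) := by nlinarith
    exact this.ne'
  have hSA : ∑ π : Equiv.Perm (Fin M), ‖A π‖ ^ 2
      = (M.factorial : ℝ) * ((((M:ℝ) * ((b:ℝ) * (N:ℝ) ^ 2 / C + (r:ℝ) ^ 2) - (k:ℝ) ^ 2)
          * ((M:ℝ) * sigmaT2 ζ))) / ((M:ℝ) * ((M:ℝ) - 1)) := by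
    rw [eq_div_iff hMM1]
    linarith [hMA]
  -- the key expectation identity
  have hEeq : (Fintype.card (DSOmega M N) : ℝ)⁻¹ * ∑ ω : DSOmega M N, ‖V ω‖ ^ 2
      = ((M:ℝ) * ((b:ℝ) * (N:ℝ) ^ 2 / C + (r:ℝ) ^ 2) - ((b:ℝ) * (N:ℝ) + (r:ℝ)) ^ 2)
            * sigmaT2 ζ / ((M:ℝ) - 1)
          + (r:ℝ) * ((N:ℝ) - (r:ℝ)) * (sigma2 ζ - sigmaT2 ζ) / ((N:ℝ) - 1) := by
    have hFMne : (M.factorial : ℝ) ≠ 0 := by positivity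
    have hFNne : (N.factorial : ℝ) ≠ 0 := by positivity
    have hM1ne : ((M:ℝ) - 1) ≠ 0 := by
      have h1 : (2:ℝ) ≤ (M:ℝ) := by exact_mod_cast hM2
      linarith
    have hN1ne : ((N:ℝ) - 1) ≠ 0 := by
      have h1 : (2:ℝ) ≤ (N:ℝ) := by exact_mod_cast hN
      linarith
    have hMne : (M:ℝ) ≠ 0 := by positivity
    have hNne : (N:ℝ) ≠ 0 := by positivity
    have hpow : (N.factorial : ℝ) ^ M = (N.factorial : ℝ) ^ (M - 1) * (N.factorial : ℝ) := by
      rw [← pow_succ]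
      congr 1
      omega
    rcases Nat.eq_zero_or_pos r with hr0 | hrpos
    · -- case r = 0 : the second window is empty
      have hW0 : ∀ ω : DSOmega M N, mbWindowSum ζ hM ω o (b * N) k = 0 := by
        intro ω
        rw [mbWindowSum]
        have hempty : Finset.univ.filter (fun q : Fin R × Fin N =>
            b * N ≤ (q.1 : ℕ) * N + (q.2 : ℕ) ∧ (q.1 : ℕ) * N + (q.2 : ℕ) < k) = ∅ := by
          rw [Finset.filter_eq_empty_iff]
          intro q _
          rintro ⟨h1, h2⟩
          have hcomm : b * N = N * b := Nat.mul_comm b N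
          omega
        rw [hempty, Finset.sum_empty]
      have hVA : ∀ ω : DSOmega M N, V ω = A ω.1 := by
        intro ω
        have h2 : ∑ q : Fin C × Fin R,
            (if ((q.2 : ℕ) = b ∧ q.1 = o) then (r : ℝ) else 0) • u (ω.1 (e q)) = 0 := by
          refine Finset.sum_eq_zero fun q _ => ?_
          rw [hr0]
          simp
        have hbNk : (b:ℝ) * (N:ℝ) = (k:ℝ) := by
          rw [← hkr, hr0]
          push_cast
          ring
        rw [hV]
        show (C : ℝ)⁻¹ • ∑ p : Fin C, mbWindowSum ζ hM ω p 0 (b * N)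
            + mbWindowSum ζ hM ω o (b * N) k - (k : ℝ) • zbar ζ = A ω.1
        rw [hV1 ω, hW0 ω, hA_expand ω.1, h2, ← hbNk]
        abel
      have hsumV : ∑ ω : DSOmega M N, ‖V ω‖ ^ 2
          = ((N.factorial : ℝ) ^ M) * ∑ π : Equiv.Perm (Fin M), ‖A π‖ ^ 2 := by
        calc ∑ ω : DSOmega M N, ‖V ω‖ ^ 2
            = ∑ π : Equiv.Perm (Fin M), ∑ s : Fin M → Equiv.Perm (Fin N), ‖A π‖ ^ 2 := by
              rw [Fintype.sum_prod_type]
              exact Finset.sum_congr rfl fun π _ => Finset.sum_congr rfl fun s _ => by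
                rw [hVA (π, s)]
          _ = ∑ π : Equiv.Perm (Fin M), (N.factorial ^ M : ℕ) • ‖A π‖ ^ 2 := by
              refine Finset.sum_congr rfl fun π _ => ?_
              rw [Finset.sum_const, Finset.card_univ, Fintype.card_fun, Fintype.card_perm,
                Fintype.card_fin, Fintype.card_fin]
          _ = ∑ π : Equiv.Perm (Fin M), ((N.factorial : ℝ) ^ M) * ‖A π‖ ^ 2 := by
              refine Finset.sum_congr rfl fun π _ => ?_
              rw [← Nat.cast_smul_eq_nsmul ℝ, smul_eq_mul]
              push_cast
              ring
          _ = ((N.factorial : ℝ) ^ M) * ∑ π : Equiv.Perm (Fin M), ‖A π‖ ^ 2 := by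
              rw [Finset.mul_sum]
      rw [hsumV, hSA, hcardOmega, ← hkr, hr0]
      push_cast
      field_simp
      ring
    · -- case r > 0
      have hblt : b < R := by
        rcases Nat.lt_or_ge b R with h | h
        · exact h
        · exact absurd (hbRr (le_antisymm hbR h)) (by omega)
      set bR : Fin R := ⟨b, hblt⟩ with hbRdef
      set a0 : Fin M := groupIdx hM o bR with ha0
      set Wf : Fin M → Equiv.Perm (Fin N) → Vec d := fun m τ => ∑ j ∈ fN, v m (τ j) with hWf
      -- second window
      have hwin2 : ∀ ω : DSOmega M N, mbWindowSum ζ hM ω o (b * N) k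
          = Wf (ω.1 a0) (ω.2 (ω.1 a0)) + ((r:ℝ) • u (ω.1 a0) + (r:ℝ) • zbar ζ) := by
        intro ω
        rw [mbWindowSum]
        have hfilt : Finset.univ.filter (fun q : Fin R × Fin N =>
            b * N ≤ (q.1 : ℕ) * N + (q.2 : ℕ) ∧ (q.1 : ℕ) * N + (q.2 : ℕ) < k)
            = {bR} ×ˢ fN := by
          ext q
          simp only [Finset.mem_filter, Finset.mem_product, Finset.mem_univ, true_and,
            Finset.mem_singleton, hfNdef, Finset.mem_filter, true_and]
          constructor
          · rintro ⟨h1, h2⟩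
            rcases Nat.lt_trichotomy (q.1 : ℕ) b with hlt | heq' | hgt
            · exfalso
              have hx : ((q.1 : ℕ) + 1) * N ≤ b * N := Nat.mul_le_mul_right N hlt
              have hx2 : ((q.1 : ℕ) + 1) * N = (q.1 : ℕ) * N + N := by ring
              have h3 := q.2.isLt
              omega
            · have hq1 : q.1 = bR := Fin.ext heq'
              refine ⟨hq1, ?_⟩
              have hx : (q.1 : ℕ) * N = N * b := by rw [heq']; ring
              have h6 : N * b + (q.2 : ℕ) < k := hx ▸ h2
              rw [← hk] at h6
              exact Nat.lt_of_add_lt_add_left h6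
            · exfalso
              have hy : (b + 1) * N ≤ (q.1 : ℕ) * N := Nat.mul_le_mul_right N hgt
              have hy2 : (b + 1) * N = b * N + N := by ring
              have hy3 : N * b = b * N := Nat.mul_comm N b
              omega
          · rintro ⟨h1, h2⟩
            have hx : (q.1 : ℕ) = b := by rw [h1]
            have hx2 : (q.1 : ℕ) * N = N * b := by rw [hx]; ring
            constructor
            · rw [Nat.mul_comm b N, ← hx2]
              exact Nat.le_add_right _ _
            · rw [hx2, ← hk]
              exact Nat.add_lt_add_left h2 _
        rw [hfilt, Finset.sum_product, Finset.sum_singleton]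
        simp only [mbVec]
        rw [Finset.sum_congr rfl fun j _ =>
          hzeta (ω.1 (groupIdx hM o bR)) (ω.2 (ω.1 (groupIdx hM o bR)) j)]
        rw [Finset.sum_add_distrib, Finset.sum_const, hfNcard,
          ← Nat.cast_smul_eq_nsmul ℝ, smul_add]
      -- evaluation of the singleton part of A
      have hsum2v : ∀ π : Equiv.Perm (Fin M), ∑ q : Fin C × Fin R,
          (if ((q.2 : ℕ) = b ∧ q.1 = o) then (r : ℝ) else 0) • u (π (e q))
          = (r:ℝ) • u (π a0) := by
        intro π
        rw [Finset.sum_eq_single ((o, bR) : Fin C × Fin R)]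
        · rw [if_pos ⟨rfl, rfl⟩, heq o bR]
        · rintro q - hq
          rw [if_neg, zero_smul]
          rintro ⟨h1, h2⟩
          exact hq (Prod.ext h2 (Fin.ext h1))
        · intro h; exact absurd (Finset.mem_univ _) h
      have hVAW : ∀ ω : DSOmega M N, V ω = A ω.1 + Wf (ω.1 a0) (ω.2 (ω.1 a0)) := by
        intro ω
        rw [hV]
        show (C : ℝ)⁻¹ • ∑ p : Fin C, mbWindowSum ζ hM ω p 0 (b * N)
            + mbWindowSum ζ hM ω o (b * N) k - (k : ℝ) • zbar ζ = _
        rw [hV1 ω, hwin2 ω, hA_expand ω.1, hsum2v ω.1, ← hkr, add_smul]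
        module
      -- summing over the data permutations
      have hsum_s : ∀ π : Equiv.Perm (Fin M),
          ∑ s : Fin M → Equiv.Perm (Fin N), ‖A π + Wf (π a0) (s (π a0))‖ ^ 2
            = (N.factorial ^ (M - 1) : ℕ) • ∑ τ : Equiv.Perm (Fin N), ‖A π + Wf (π a0) τ‖ ^ 2 := by
        intro π
        have h := sum_fn_apply (π a0) (fun τ : Equiv.Perm (Fin N) => ‖A π + Wf (π a0) τ‖ ^ 2)
        simpa [Fintype.card_perm, Fintype.card_fin] using h
      have hcross : ∀ π : Equiv.Perm (Fin M), ∑ τ : Equiv.Perm (Fin N), Wf (π a0) τ = 0 := by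
        intro π
        exact sum_perm_comb_zero (v (π a0)) (hvsum _) fN
      have hinner : ∀ π : Equiv.Perm (Fin M), ∑ τ : Equiv.Perm (Fin N), ‖A π + Wf (π a0) τ‖ ^ 2
          = (N.factorial : ℝ) * ‖A π‖ ^ 2 + ∑ τ : Equiv.Perm (Fin N), ‖Wf (π a0) τ‖ ^ 2 := by
        intro π
        calc ∑ τ : Equiv.Perm (Fin N), ‖A π + Wf (π a0) τ‖ ^ 2
            = ∑ τ : Equiv.Perm (Fin N), (‖A π‖ ^ 2 + 2 * (inner ℝ (A π) (Wf (π a0) τ) : ℝ)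
                + ‖Wf (π a0) τ‖ ^ 2) := by
              exact Finset.sum_congr rfl fun τ _ => norm_add_sq_real _ _
          _ = (Fintype.card (Equiv.Perm (Fin N))) • ‖A π‖ ^ 2
                + 2 * (inner ℝ (A π) (∑ τ : Equiv.Perm (Fin N), Wf (π a0) τ) : ℝ)
                + ∑ τ : Equiv.Perm (Fin N), ‖Wf (π a0) τ‖ ^ 2 := by
              rw [Finset.sum_add_distrib, Finset.sum_add_distrib, Finset.sum_const,
                Finset.card_univ, ← Finset.mul_sum, ← inner_sum]
          _ = (N.factorial : ℝ) * ‖A π‖ ^ 2 + ∑ τ : Equiv.Perm (Fin N), ‖Wf (π a0) τ‖ ^ 2 := by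
              rw [hcross π, inner_zero_right, Fintype.card_perm, Fintype.card_fin,
                ← Nat.cast_smul_eq_nsmul ℝ, smul_eq_mul]
              ring
      -- master identity for the within-client part
      have hNN1 : ((N:ℝ) * ((N:ℝ) - 1)) ≠ 0 := by
        have h1 : (2:ℝ) ≤ (N:ℝ) := by exact_mod_cast hN
        have : (0:ℝ) < (N:ℝ) * ((N:ℝ) - 1) := by nlinarith
        exact this.ne'
      set G : Fin M → ℝ := fun m => (N.factorial : ℝ)
          * (((N:ℝ) * (r:ℝ) - (r:ℝ) ^ 2) * ∑ j, ‖v m j‖ ^ 2) / ((N:ℝ) * ((N:ℝ) - 1)) with hG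
      have hWmaster : ∀ m : Fin M, ∑ τ : Equiv.Perm (Fin N), ‖Wf m τ‖ ^ 2 = G m := by
        intro m
        set cN : Fin N → ℝ := fun j => if (j : ℕ) < r then 1 else 0 with hcN
        have hWc : ∀ τ : Equiv.Perm (Fin N), Wf m τ = ∑ j : Fin N, cN j • v m (τ j) := by
          intro τ
          rw [hWf]
          show ∑ j ∈ fN, v m (τ j) = _
          rw [hfNdef, Finset.sum_filter]
          refine Finset.sum_congr rfl fun j _ => ?_
          rw [hcN]
          by_cases hj : (j : ℕ) < r <;> simp [hj]
        have hcN1 : ∑ j, cN j = (r:ℝ) := by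
          rw [hcN]
          rw [← Finset.sum_filter, ← hfNdef, Finset.sum_const, hfNcard, nsmul_eq_mul, mul_one]
        have hcN2 : ∑ j, (cN j) ^ 2 = (r:ℝ) := by
          rw [← hcN1]
          refine Finset.sum_congr rfl fun j _ => ?_
          rw [hcN]
          by_cases hj : (j : ℕ) < r <;> simp [hj]
        have hm := master_lemma (v m) (hvsum m) cN (by simpa using hN)
        simp only [Fintype.card_fin] at hm
        rw [hcN1, hcN2] at hm
        rw [Finset.sum_congr rfl (fun τ (_ : τ ∈ Finset.univ) =>
          congrArg (fun z => ‖z‖ ^ 2) (hWc τ))]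
        rw [hG, eq_div_iff hNN1]
        linear_combination hm
      have hGperm : ∑ π : Equiv.Perm (Fin M), G (π a0)
          = (M.factorial : ℝ) * (∑ m, G m) / (M:ℝ) := by
        have h := card_mul_sum_perm G a0
        simp only [Fintype.card_fin] at h
        rw [eq_div_iff hMne]
        linarith [h]
      have hGsum : ∑ m, G m = (N.factorial : ℝ)
          * (((N:ℝ) * (r:ℝ) - (r:ℝ) ^ 2) * ((N:ℝ) * (M:ℝ) * (sigma2 ζ - sigmaT2 ζ)))
          / ((N:ℝ) * ((N:ℝ) - 1)) := by
        rw [hG, ← hQv]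
        rw [← Finset.sum_div]
        congr 1
        rw [← Finset.mul_sum]
        congr 1
        rw [← Finset.mul_sum]
      -- total sum over the sample space
      have hsumV : ∑ ω : DSOmega M N, ‖V ω‖ ^ 2
          = ((N.factorial : ℝ) ^ (M - 1)) * ((N.factorial : ℝ)
              * ∑ π : Equiv.Perm (Fin M), ‖A π‖ ^ 2
              + ∑ π : Equiv.Perm (Fin M), G (π a0)) := by
        calc ∑ ω : DSOmega M N, ‖V ω‖ ^ 2
            = ∑ π : Equiv.Perm (Fin M), ∑ s : Fin M → Equiv.Perm (Fin N),
                ‖A π + Wf (π a0) (s (π a0))‖ ^ 2 := by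
              rw [Fintype.sum_prod_type]
              exact Finset.sum_congr rfl fun π _ => Finset.sum_congr rfl fun s _ => by
                rw [hVAW (π, s)]
          _ = ∑ π : Equiv.Perm (Fin M), ((N.factorial : ℝ) ^ (M - 1))
                * ((N.factorial : ℝ) * ‖A π‖ ^ 2 + G (π a0)) := by
              refine Finset.sum_congr rfl fun π _ => ?_
              rw [hsum_s π, ← Nat.cast_smul_eq_nsmul ℝ, smul_eq_mul, hinner π, hWmaster (π a0)]
              push_cast
              ring
          _ = ((N.factorial : ℝ) ^ (M - 1)) * ((N.factorial : ℝ)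
                * ∑ π : Equiv.Perm (Fin M), ‖A π‖ ^ 2
                + ∑ π : Equiv.Perm (Fin M), G (π a0)) := by
              rw [← Finset.mul_sum]
              congr 1
              rw [Finset.sum_add_distrib, ← Finset.mul_sum]
      rw [hsumV, hSA, hGperm, hGsum, hcardOmega, hpow, ← hkr]
      field_simp
  rw [hEeq]
  have h2M : (2:ℝ) ≤ (M:ℝ) := by exact_mod_cast hM2
  have h2N : (2:ℝ) ≤ (N:ℝ) := by exact_mod_cast hN
  exact final_ineq (M:ℝ) (N:ℝ) (C:ℝ) (R:ℝ) (b:ℝ) (r:ℝ) (sigma2 ζ) (sigmaT2 ζ)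
    h2M h2N (by exact_mod_cast hC) (by exact_mod_cast hM)
    (by positivity) (by exact_mod_cast hbR) (by positivity) (by exact_mod_cast hrN.le)
    hst0 hsdiff

end
end

section
/- Suppose each local function f_m : ℝ^d → ℝ is convex and L-smooth, let x_⋆ be the minimizer of f = (1/M) Σ_m f_m, and let x_⋆^r be the round-level star sequence generated by the regularized client participation scheme with server step size η (i.e., x_⋆^{r+1} = x_⋆^r − (η/C) Σ_{m ∈ S^{λ_r}} ∇f_m(x_⋆), where cohorts of size C partition [M] by random reshuffling). Then the client-shuffling variance quantity σ²_{m,CS} := (1/η²) E[ D_{f_m}(x_⋆^r, x_⋆) ] satisfies max_{m ∈ [M]} σ²_{m,CS} ≤ L M σ̃_⋆² / (2C²), where D_h(x, y) = h(x) − h(y) − ⟨∇h(y), x − y⟩ and σ̃_⋆² = (1/M) Σ_{m=1}^M ‖∇f_m(x_⋆)‖². -/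
open Finset RealInnerProductSpace

noncomputable section

/-- Expectation: the uniform average over a finite sample space. -/
def Eavg {Ω : Type*} [Fintype Ω] (X : Ω → ℝ) : ℝ :=
  (Fintype.card Ω : ℝ)⁻¹ * ∑ ω, X ω

/-- The Bregman divergence `D_h(x, y) = h(x) − h(y) − ⟨∇h(y), x − y⟩`. -/
def breg {d : ℕ} (h : Vec d → ℝ) (x y : Vec d) : ℝ :=
  h x - h y - ⟪gradient h y, x - y⟫

/-- The index (in `[M]`) of the `c`-th slot of cohort `r`, when the `M = C·R` clients are
partitioned into `R` cohorts of size `C`. -/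
def cohortIdx {M C R : ℕ} (hM : M = C * R) (r : Fin R) (c : Fin C) : Fin M :=
  ⟨(r : ℕ) * C + (c : ℕ), by
    have h1 : (r : ℕ) * C + (c : ℕ) < ((r : ℕ) + 1) * C := by
      calc (r : ℕ) * C + (c : ℕ) < (r : ℕ) * C + C := Nat.add_lt_add_left c.isLt _
        _ = ((r : ℕ) + 1) * C := by ring
    have h2 : ((r : ℕ) + 1) * C ≤ R * C := Nat.mul_le_mul (Nat.succ_le_of_lt r.isLt) (le_refl C)
    have h3 : R * C = M := by rw [hM, Nat.mul_comm]
    exact h1.trans_le (h2.trans_eq h3)⟩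

lemma descent_lemma {d : ℕ} (f : Vec d → ℝ) (L : ℝ) (hL : 0 ≤ L)
    (hdiff : Differentiable ℝ f)
    (hsmooth : ∀ x y, ‖gradient f x - gradient f y‖ ≤ L * ‖x - y‖)
    (x y : Vec d) : breg f x y ≤ L / 2 * ‖x - y‖ ^ 2 := by
  set v := x - y with hv
  set φ : ℝ → ℝ := fun t => f (y + t • v) - t * ⟪gradient f y, v⟫ - L / 2 * ‖v‖ ^ 2 * t ^ 2
    with hφ
  have hline : ∀ t : ℝ, HasDerivAt (fun t : ℝ => y + t • v) v t := by
    intro t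
    simpa using ((hasDerivAt_id t).smul_const v).const_add y
  have hder : ∀ t : ℝ, HasDerivAt φ
      (⟪gradient f (y + t • v), v⟫ - ⟪gradient f y, v⟫ - L * ‖v‖ ^ 2 * t) t := by
    intro t
    have h1 : HasDerivAt (fun t : ℝ => f (y + t • v)) ⟪gradient f (y + t • v), v⟫ t := by
      have hg := (hdiff (y + t • v)).hasGradientAt
      have hf := hg.hasFDerivAt
      have := hf.comp_hasDerivAt t (hline t)
      simpa [Function.comp_def] using this
    have h2 : HasDerivAt (fun t : ℝ => t * ⟪gradient f y, v⟫) ⟪gradient f y, v⟫ t := by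
      simpa using (hasDerivAt_id t).mul_const (⟪gradient f y, v⟫)
    have h3 : HasDerivAt (fun t : ℝ => L / 2 * ‖v‖ ^ 2 * t ^ 2) (L * ‖v‖ ^ 2 * t) t := by
      have := (hasDerivAt_pow 2 t).const_mul (L / 2 * ‖v‖ ^ 2)
      refine this.congr_deriv ?_
      ring
    simpa [hφ] using (h1.fun_sub h2).fun_sub h3
  have hanti : AntitoneOn φ (Set.Icc (0:ℝ) 1) := by
    apply antitoneOn_of_deriv_nonpos (convex_Icc 0 1)
    · exact (fun t _ => ((hder t).differentiableAt.continuousAt).continuousWithinAt : ContinuousOn φ _)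
    · intro t ht
      exact (hder t).differentiableAt.differentiableWithinAt
    · intro t ht
      rw [(hder t).deriv]
      rw [interior_Icc] at ht
      have ht0 : 0 < t := ht.1
      have ht1 : t < 1 := ht.2
      have hcs : ⟪gradient f (y + t • v) - gradient f y, v⟫ ≤ L * ‖v‖ ^ 2 * t := by
        calc ⟪gradient f (y + t • v) - gradient f y, v⟫
            ≤ ‖gradient f (y + t • v) - gradient f y‖ * ‖v‖ := real_inner_le_norm _ _
          _ ≤ (L * ‖y + t • v - y‖) * ‖v‖ := by
              apply mul_le_mul_of_nonneg_right (hsmooth _ _) (norm_nonneg _)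
          _ = L * ‖v‖ ^ 2 * t := by
              have : ‖y + t • v - y‖ = t * ‖v‖ := by
                simp [norm_smul, abs_of_nonneg ht0.le]
              rw [this]; ring
      have : ⟪gradient f (y + t • v), v⟫ - ⟪gradient f y, v⟫
          = ⟪gradient f (y + t • v) - gradient f y, v⟫ := by
        rw [inner_sub_left]
      linarith [hcs, this]
  have h01 : φ 1 ≤ φ 0 := hanti (by norm_num) (by norm_num) (by norm_num)
  have e1 : φ 1 = f x - ⟪gradient f y, v⟫ - L / 2 * ‖v‖ ^ 2 := by
    simp [hφ, hv]
  have e0 : φ 0 = f y := by simp [hφ]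
  rw [e1, e0] at h01
  rw [breg, ← hv]
  linarith

lemma grad_sum_zero_lemma {d M : ℕ} (f : Fin M → Vec d → ℝ)
    (hdiff : ∀ m, Differentiable ℝ (f m)) (xs : Vec d)
    (hmin : ∀ x, (M : ℝ)⁻¹ * ∑ m, f m xs ≤ (M : ℝ)⁻¹ * ∑ m, f m x)
    (hM : 0 < M) :
    ∑ m, gradient (f m) xs = 0 := by
  set F : Vec d → ℝ := fun x => (M : ℝ)⁻¹ * ∑ m, f m x with hF
  have hFd : ∀ x, HasFDerivAt F ((M : ℝ)⁻¹ • ∑ m, fderiv ℝ (f m) x) x := by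
    intro x
    have h1 : HasFDerivAt (fun x => ∑ m, f m x) (∑ m, fderiv ℝ (f m) x) x := by
      apply HasFDerivAt.fun_sum
      intro m _
      exact (hdiff m x).hasFDerivAt
    exact h1.const_smul ((M : ℝ)⁻¹)
  have hloc : IsLocalMin F xs := by
    apply IsMinOn.isLocalMin (s := Set.univ)
    · intro x _
      exact hmin x
    · exact Filter.univ_mem
  have hzero : fderiv ℝ F xs = 0 := hloc.fderiv_eq_zero
  have : (M : ℝ)⁻¹ • ∑ m, fderiv ℝ (f m) xs = 0 := by
    rw [← (hFd xs).fderiv]; exact hzero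
  have hsum0 : ∑ m, fderiv ℝ (f m) xs = 0 := by
    have hMne : (M : ℝ)⁻¹ ≠ 0 := by positivity
    exact (smul_eq_zero.mp this).resolve_left hMne
  have hgrad : ∀ m, (InnerProductSpace.toDual ℝ (Vec d)) (gradient (f m) xs)
      = fderiv ℝ (f m) xs := by
    intro m
    rw [gradient]
    exact (InnerProductSpace.toDual ℝ (Vec d)).apply_symm_apply _
  have : (InnerProductSpace.toDual ℝ (Vec d)) (∑ m, gradient (f m) xs) = 0 := by
    rw [map_sum]
    simp_rw [hgrad]
    exact hsum0
  have := congrArg (InnerProductSpace.toDual ℝ (Vec d)).symm this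
  simpa [gradient] using this

lemma perm_sum_sq_bound {d M : ℕ} (g : Fin M → Vec d) (hg : ∑ m, g m = 0)
    (A : Finset (Fin M)) :
    ∑ ρ : Equiv.Perm (Fin M), ‖∑ j ∈ A, g (ρ j)‖ ^ 2
      ≤ (Fintype.card (Equiv.Perm (Fin M)) : ℝ) * ∑ m, ‖g m‖ ^ 2 := by
  set Φ : Fin M → Fin M → ℝ :=
    fun i j => ∑ ρ : Equiv.Perm (Fin M), ⟪g (ρ i), g (ρ j)⟫ with hΦ
  -- invariance under relabeling
  have hinv : ∀ (τ : Equiv.Perm (Fin M)) i j, Φ (τ i) (τ j) = Φ i j := by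
    intro τ i j
    rw [hΦ]
    refine (Fintype.sum_equiv (Equiv.mulRight τ⁻¹)
      (fun σ => ⟪g (σ i), g (σ j)⟫) (fun ρ => ⟪g (ρ (τ i)), g (ρ (τ j))⟫) ?_).symm
    intro σ
    simp [Equiv.Perm.mul_apply]
  -- diagonal nonneg
  have hdiag : ∀ i, 0 ≤ Φ i i := by
    intro i
    apply Finset.sum_nonneg
    intro ρ _
    exact real_inner_self_nonneg
  -- row sums vanish
  have hrow : ∀ i, ∑ j, Φ i j = 0 := by
    intro i
    rw [hΦ]
    rw [Finset.sum_comm]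
    apply Finset.sum_eq_zero
    intro ρ _
    have : ∑ j, g (ρ j) = 0 := by
      rw [Equiv.sum_comp ρ g]; exact hg
    rw [← inner_sum, this, inner_zero_right]
  -- off-diagonal nonpos
  have hoff : ∀ i j, j ≠ i → Φ i j ≤ 0 := by
    intro i j hji
    have hall : ∀ j' ∈ univ.erase i, Φ i j' = Φ i j := by
      intro j' hj'
      have hj'i : j' ≠ i := Finset.ne_of_mem_erase hj'
      have hswap := hinv (Equiv.swap j j') i j
      rw [Equiv.swap_apply_left,
        Equiv.swap_apply_of_ne_of_ne (Ne.symm hji) (Ne.symm hj'i)] at hswap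
      exact hswap
    have hsplit : Φ i i + ∑ j' ∈ univ.erase i, Φ i j' = 0 := by
      rw [Finset.add_sum_erase _ _ (Finset.mem_univ i)]
      exact hrow i
    have hcard : ∑ j' ∈ univ.erase i, Φ i j' = ((univ.erase i).card : ℝ) * Φ i j := by
      rw [Finset.sum_congr rfl hall, Finset.sum_const, nsmul_eq_mul]
    have hpos : (0 : ℝ) < ((univ.erase i).card : ℝ) := by
      have : j ∈ univ.erase i := Finset.mem_erase.mpr ⟨hji, Finset.mem_univ j⟩
      have := Finset.card_pos.mpr ⟨j, this⟩
      exact_mod_cast this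
    nlinarith [hdiag i]
  -- main computation
  have hexp : ∀ ρ : Equiv.Perm (Fin M),
      ‖∑ j ∈ A, g (ρ j)‖ ^ 2 = ∑ i ∈ A, ∑ j ∈ A, ⟪g (ρ i), g (ρ j)⟫ := by
    intro ρ
    rw [← real_inner_self_eq_norm_sq, sum_inner]
    congr 1
    ext i
    rw [inner_sum]
  calc ∑ ρ : Equiv.Perm (Fin M), ‖∑ j ∈ A, g (ρ j)‖ ^ 2
      = ∑ i ∈ A, ∑ j ∈ A, Φ i j := by
        simp_rw [hexp]
        rw [Finset.sum_comm]
        congr 1; ext i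
        rw [Finset.sum_comm]
    _ ≤ ∑ i ∈ A, Φ i i := by
        apply Finset.sum_le_sum
        intro i hi
        rw [← Finset.add_sum_erase _ _ hi]
        have : ∑ j ∈ A.erase i, Φ i j ≤ 0 := by
          apply Finset.sum_nonpos
          intro j hj
          exact hoff i j (Finset.ne_of_mem_erase hj)
        linarith
    _ ≤ ∑ i, Φ i i := Finset.sum_le_sum_of_subset_of_nonneg (Finset.subset_univ A)
        (fun i _ _ => hdiag i)
    _ = (Fintype.card (Equiv.Perm (Fin M)) : ℝ) * ∑ m, ‖g m‖ ^ 2 := by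
        rw [hΦ]
        rw [Finset.sum_comm]
        rw [Finset.sum_congr rfl (fun ρ _ => ?_)]
        · rw [Finset.sum_const, nsmul_eq_mul, Fintype.card]
        · rw [← Equiv.sum_comp ρ (fun m => ‖g m‖ ^ 2)]
          apply Finset.sum_congr rfl
          intro i _
          rw [real_inner_self_eq_norm_sq]

/-- If each `f_m` is convex and `L`-smooth and `x_⋆` minimizes
`f = (1/M) Σ_m f_m`, then along the round-level star sequence
`x_⋆^{r+1} = x_⋆^r − (η/C) Σ_{m ∈ S^{λ_r}} ∇f_m(x_⋆)` (cohorts of size `C` partitioning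
`[M]` via a uniformly random permutation), the client-shuffling variance
`σ²_{m,CS} = η⁻² E[D_{f_m}(x_⋆^r, x_⋆)]` satisfies
`max_m σ²_{m,CS} ≤ L M σ̃_⋆² / (2C²)`. -/
theorem statement9 (d M C R : ℕ) (hM : M = C * R) (hC : 0 < C)
    (L : ℝ) (hL : 0 < L)
    (f : Fin M → Vec d → ℝ)
    (hdiff : ∀ m, Differentiable ℝ (f m))
    (hconv : ∀ m, ConvexOn ℝ Set.univ (f m))
    (hsmooth : ∀ m x y, ‖gradient (f m) x - gradient (f m) y‖ ≤ L * ‖x - y‖)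
    (η : ℝ) (hη : 0 < η) (xs : Vec d)
    (hmin : ∀ x, (M : ℝ)⁻¹ * ∑ m, f m xs ≤ (M : ℝ)⁻¹ * ∑ m, f m x)
    (Xround : Equiv.Perm (Fin M) → ℕ → Vec d)
    (h0 : ∀ ρ, Xround ρ 0 = xs)
    (hround : ∀ ρ (r : ℕ) (hr : r < R),
      Xround ρ (r + 1) =
        Xround ρ r -
          (η / (C : ℝ)) • ∑ c : Fin C, gradient (f (ρ (cohortIdx hM ⟨r, hr⟩ c))) xs) :
    ∀ (m : Fin M) (r : ℕ), r < R →
      (η ^ 2)⁻¹ * Eavg (fun ρ : Equiv.Perm (Fin M) => breg (f m) (Xround ρ r) xs)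
        ≤ L * (M : ℝ) * ((M : ℝ)⁻¹ * ∑ m', ‖gradient (f m') xs‖ ^ 2) /
            (2 * (C : ℝ) ^ 2) := by
  intro m r hr
  have hM0 : 0 < M := m.pos
  have hg0 : ∑ m', gradient (f m') xs = 0 := grad_sum_zero_lemma f hdiff xs hmin hM0
  -- closed form for the star sequence
  have hX : ∀ (ρ : Equiv.Perm (Fin M)) (r' : ℕ), r' ≤ R →
      Xround ρ r' = xs - (η / (C : ℝ)) •
        ∑ j ∈ univ.filter (fun j : Fin M => (j : ℕ) < r' * C), gradient (f (ρ j)) xs := by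
    intro ρ r'
    induction r' with
    | zero =>
      intro _
      have : univ.filter (fun j : Fin M => (j : ℕ) < 0 * C) = ∅ := by
        apply Finset.filter_false_of_mem
        intro j _
        omega
      rw [h0, this]
      simp
    | succ r'' ih =>
      intro hle
      have hr'' : r'' < R := lt_of_lt_of_le (Nat.lt_succ_self r'') hle
      have hmul : (r'' + 1) * C = r'' * C + C := by ring
      have hcoh : ∑ c : Fin C, gradient (f (ρ (cohortIdx hM ⟨r'', hr''⟩ c))) xs
          = ∑ j ∈ univ.filter
              (fun j : Fin M => r'' * C ≤ (j : ℕ) ∧ (j : ℕ) < (r'' + 1) * C),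
              gradient (f (ρ j)) xs := by
        have himg : univ.filter
            (fun j : Fin M => r'' * C ≤ (j : ℕ) ∧ (j : ℕ) < (r'' + 1) * C)
            = univ.image (fun c : Fin C => cohortIdx hM ⟨r'', hr''⟩ c) := by
          ext j
          simp only [Finset.mem_filter, Finset.mem_image, Finset.mem_univ, true_and]
          constructor
          · rintro ⟨h1, h2⟩
            have hcv : (j : ℕ) - r'' * C < C := by omega
            refine ⟨⟨(j : ℕ) - r'' * C, hcv⟩, ?_⟩
            apply Fin.ext
            simp only [cohortIdx, Fin.val_mk]
            omega
          · rintro ⟨c, rfl⟩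
            simp only [cohortIdx, Fin.val_mk]
            have := c.isLt
            omega
        rw [himg, Finset.sum_image]
        intro c1 _ c2 _ hEq
        have : (r'' : ℕ) * C + (c1 : ℕ) = (r'' : ℕ) * C + (c2 : ℕ) := congrArg Fin.val hEq
        exact Fin.ext (by omega)
      have hsplit : ∑ j ∈ univ.filter (fun j : Fin M => (j : ℕ) < (r'' + 1) * C),
            gradient (f (ρ j)) xs
          = (∑ j ∈ univ.filter (fun j : Fin M => (j : ℕ) < r'' * C), gradient (f (ρ j)) xs)
            + ∑ j ∈ univ.filter
                (fun j : Fin M => r'' * C ≤ (j : ℕ) ∧ (j : ℕ) < (r'' + 1) * C),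
                gradient (f (ρ j)) xs := by
        have e1 : (univ.filter (fun j : Fin M => (j : ℕ) < (r'' + 1) * C)).filter
            (fun j : Fin M => (j : ℕ) < r'' * C)
            = univ.filter (fun j : Fin M => (j : ℕ) < r'' * C) := by
          ext j
          simp only [Finset.mem_filter, Finset.mem_univ, true_and]
          omega
        have e2 : (univ.filter (fun j : Fin M => (j : ℕ) < (r'' + 1) * C)).filter
            (fun j : Fin M => ¬ (j : ℕ) < r'' * C)
            = univ.filter
                (fun j : Fin M => r'' * C ≤ (j : ℕ) ∧ (j : ℕ) < (r'' + 1) * C) := by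
          ext j
          simp only [Finset.mem_filter, Finset.mem_univ, true_and]
          omega
        rw [← Finset.sum_filter_add_sum_filter_not
          (univ.filter (fun j : Fin M => (j : ℕ) < (r'' + 1) * C))
          (fun j : Fin M => (j : ℕ) < r'' * C), e1, e2]
      rw [hround ρ r'' hr'', ih hr''.le, hcoh, hsplit, smul_add]
      abel
  -- per-permutation bound
  set A : Finset (Fin M) := univ.filter (fun j : Fin M => (j : ℕ) < r * C) with hA
  have hbreg : ∀ ρ : Equiv.Perm (Fin M),
      breg (f m) (Xround ρ r) xs
        ≤ L / 2 * (η / (C : ℝ)) ^ 2 * ‖∑ j ∈ A, gradient (f (ρ j)) xs‖ ^ 2 := by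
    intro ρ
    have h1 := descent_lemma (f m) L hL.le (hdiff m) (hsmooth m) (Xround ρ r) xs
    have h2 : ‖Xround ρ r - xs‖ ^ 2
        = (η / (C : ℝ)) ^ 2 * ‖∑ j ∈ A, gradient (f (ρ j)) xs‖ ^ 2 := by
      rw [hX ρ r hr.le]
      have : xs - (η / (C : ℝ)) • ∑ j ∈ A, gradient (f (ρ j)) xs - xs
          = -((η / (C : ℝ)) • ∑ j ∈ A, gradient (f (ρ j)) xs) := by abel
      rw [this, norm_neg, norm_smul, mul_pow]
      congr 1
      rw [Real.norm_eq_abs, sq_abs]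
    calc breg (f m) (Xround ρ r) xs ≤ L / 2 * ‖Xround ρ r - xs‖ ^ 2 := h1
      _ = L / 2 * (η / (C : ℝ)) ^ 2 * ‖∑ j ∈ A, gradient (f (ρ j)) xs‖ ^ 2 := by
          rw [h2]; ring
  -- sum over permutations
  set K : ℝ := (Fintype.card (Equiv.Perm (Fin M)) : ℝ) with hK
  have hKpos : 0 < K := by
    rw [hK]
    exact_mod_cast Fintype.card_pos
  set S : ℝ := ∑ m', ‖gradient (f m') xs‖ ^ 2 with hS
  have hSnn : 0 ≤ S := Finset.sum_nonneg fun m' _ => sq_nonneg _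
  have hperm : ∑ ρ : Equiv.Perm (Fin M), ‖∑ j ∈ A, gradient (f (ρ j)) xs‖ ^ 2 ≤ K * S := by
    simpa using perm_sum_sq_bound (fun m' => gradient (f m') xs) hg0 A
  have hsum : ∑ ρ : Equiv.Perm (Fin M), breg (f m) (Xround ρ r) xs
      ≤ L / 2 * (η / (C : ℝ)) ^ 2 * (K * S) := by
    calc ∑ ρ : Equiv.Perm (Fin M), breg (f m) (Xround ρ r) xs
        ≤ ∑ ρ : Equiv.Perm (Fin M),
            L / 2 * (η / (C : ℝ)) ^ 2 * ‖∑ j ∈ A, gradient (f (ρ j)) xs‖ ^ 2 :=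
          Finset.sum_le_sum fun ρ _ => hbreg ρ
      _ = L / 2 * (η / (C : ℝ)) ^ 2
            * ∑ ρ : Equiv.Perm (Fin M), ‖∑ j ∈ A, gradient (f (ρ j)) xs‖ ^ 2 := by
          rw [← Finset.mul_sum]
      _ ≤ L / 2 * (η / (C : ℝ)) ^ 2 * (K * S) := by
          apply mul_le_mul_of_nonneg_left hperm
          positivity
  have hEavg : Eavg (fun ρ : Equiv.Perm (Fin M) => breg (f m) (Xround ρ r) xs)
      ≤ L / 2 * (η / (C : ℝ)) ^ 2 * S := by
    rw [Eavg, ← hK]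
    calc K⁻¹ * ∑ ρ : Equiv.Perm (Fin M), breg (f m) (Xround ρ r) xs
        ≤ K⁻¹ * (L / 2 * (η / (C : ℝ)) ^ 2 * (K * S)) :=
          mul_le_mul_of_nonneg_left hsum (by positivity)
      _ = L / 2 * (η / (C : ℝ)) ^ 2 * S := by
          have hKne : K ≠ 0 := ne_of_gt hKpos
          field_simp
  have hfin : (η ^ 2)⁻¹ * (L / 2 * (η / (C : ℝ)) ^ 2 * S)
      = L * (M : ℝ) * ((M : ℝ)⁻¹ * S) / (2 * (C : ℝ) ^ 2) := by
    have hMne : (M : ℝ) ≠ 0 := by positivity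
    have hCne : (C : ℝ) ≠ 0 := by positivity
    have hηne : η ≠ 0 := ne_of_gt hη
    field_simp
  calc (η ^ 2)⁻¹ * Eavg (fun ρ : Equiv.Perm (Fin M) => breg (f m) (Xround ρ r) xs)
      ≤ (η ^ 2)⁻¹ * (L / 2 * (η / (C : ℝ)) ^ 2 * S) :=
        mul_le_mul_of_nonneg_left hEavg (by positivity)
    _ = L * (M : ℝ) * ((M : ℝ)⁻¹ * S) / (2 * (C : ℝ) ^ 2) := hfin

end
end
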